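/- arXiv:2307.01697 — 3 statements merged into one kernel-verified Lean document; each statement's English description precedes it below -/
import Mathlib

section
/- In the synthetic setup, let θ ∈ 𝒵 be such that [θ] ∈ Pos(X). Then every f ∈ 𝒟 can be written as f = f⁺ − f⁻ with f⁺, f⁻ ∈ 𝒟_{tθ} = t·𝒟_θ for some t > 0. In particular, 𝒟_θ spans 𝒟 as a real vector space. -/
open scoped BigOperators
noncomputable section

/-- The synthetic pluripotential-theoretic setup of Boucksom–Jonsson. -/
structure PPSetup where
  /-- the compact Hausdorff topological space -/
  X : Type
  [topX : TopologicalSpace X]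
  [cptX : CompactSpace X]
  [t2X : T2Space X]
  /-- the dense space of test functions -/
  D : Submodule ℝ C(X, ℝ)
  D_dense : Dense (D : Set C(X, ℝ))
  D_const : ∀ c : ℝ, ContinuousMap.const X c ∈ D
  /-- the space of closed (1,1)-forms, a partially ordered real vector space -/
  Z : Type
  [zGroup : AddCommGroup Z]
  [zOrder : PartialOrder Z]
  [zOrdered : IsOrderedAddMonoid Z]
  [zModule : Module ℝ Z]
  [zSMul : PosSMulStrictMono ℝ Z]
  [zSMulRefl : PosSMulReflectLT ℝ Z]
  /-- the positive cone spans Z -/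
  pos_spans : Submodule.span ℝ {θ : Z | 0 ≤ θ} = ⊤
  /-- the positive cone is closed in the finest vector space topology -/
  pos_closed : ∀ (k : ℕ) (u : (Fin k → ℝ) →ₗ[ℝ] Z), IsClosed {x : Fin k → ℝ | 0 ≤ u x}
  /-- the ddᶜ operator -/
  ddc : D →ₗ[ℝ] Z
  ddc_const : ∀ c : ℝ, ddc ⟨ContinuousMap.const X c, D_const c⟩ = 0
  /-- the dimension is n = m + 1 ≥ 1 -/
  m : ℕ
  /-- the wedge pairing: an n-tuple of forms yields a signed Radon measure, encoded as the
  linear functional (f ↦ ∫ f θ₁∧⋯∧θₙ) on C(X,ℝ). -/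
  wedge : MultilinearMap ℝ (fun _ : Fin (m + 1) => Z) (C(X, ℝ) →ₗ[ℝ] ℝ)
  wedge_symm : ∀ (σ : Equiv.Perm (Fin (m + 1))) (θ : Fin (m + 1) → Z), wedge (θ ∘ σ) = wedge θ
  wedge_ne : wedge ≠ 0
  wedge_pos : ∀ θ : Fin (m + 1) → Z, (∀ i, 0 ≤ θ i) → ∀ f : C(X, ℝ), 0 ≤ f → 0 ≤ wedge θ f
  hodge_symm : ∀ (θ : Fin m → Z) (φ ψ : D),
    wedge (Fin.cons (ddc ψ) θ) (φ : C(X, ℝ)) = wedge (Fin.cons (ddc φ) θ) (ψ : C(X, ℝ))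
  hodge_neg : ∀ θ : Fin m → Z, (∀ i, 0 ≤ θ i) → ∀ φ : D,
    wedge (Fin.cons (ddc φ) θ) (φ : C(X, ℝ)) ≤ 0

attribute [instance] PPSetup.topX PPSetup.cptX PPSetup.t2X PPSetup.zGroup PPSetup.zOrder
  PPSetup.zOrdered PPSetup.zModule PPSetup.zSMul PPSetup.zSMulRefl

namespace PPSetup

variable (S : PPSetup)

/-- the dimension -/
abbrev n : ℕ := S.m + 1

/-- the constant function 1 -/
def one : C(S.X, ℝ) := ContinuousMap.const S.X 1

/-- constants as test functions -/
def constD (c : ℝ) : S.D := ⟨ContinuousMap.const S.X c, S.D_const c⟩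

/-- Bott–Chern cohomology -/
abbrev HBC := S.Z ⧸ LinearMap.range S.ddc

/-- the class of a form -/
def cls (θ : S.Z) : S.HBC := Submodule.Quotient.mk θ

/-- the positive cone in Bott–Chern cohomology: the interior of the image of Z₊ with respect to
the finest vector space topology, described concretely as the algebraic interior. -/
def Pos : Set S.HBC :=
  {α | ∀ β : S.HBC, ∃ ε : ℝ, 0 < ε ∧ ∀ t : ℝ, |t| ≤ ε → ∃ θ : S.Z, 0 ≤ θ ∧ S.cls θ = α + t • β}

/-- θ-psh test functions -/
def psh (θ : S.Z) : Set S.D := {φ | 0 ≤ θ + S.ddc φ}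

/-- the energy pairing, given by its explicit formula -/
def epair (p : Fin (S.m + 2) → S.Z × S.D) : ℝ :=
  ∑ i : Fin (S.m + 2),
    S.wedge (fun j : Fin (S.m + 1) =>
      if ((i.succAbove j : Fin (S.m + 2)) : ℕ) < (i : ℕ) then (p (i.succAbove j)).1
      else (p (i.succAbove j)).1 + S.ddc (p (i.succAbove j)).2)
      (((p i).2 : C(S.X, ℝ)))

/-- (ω,φ)^{n+1} -/
def epow (ω : S.Z) (φ : S.D) : ℝ := S.epair fun _ => (ω, φ)

/-- the volume ∫ ωⁿ -/
def Vol (ω : S.Z) : ℝ := S.wedge (fun _ => ω) S.one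

/-- the Monge–Ampère energy E_ω(φ) = (ω,φ)^{n+1}/((n+1)V_ω) -/
def En (ω : S.Z) (φ : S.D) : ℝ := S.epow ω φ / ((S.m + 2) * S.Vol ω)

/-- the Monge–Ampère measure MA_ω(φ) = V_ω⁻¹ (ω+ddᶜφ)ⁿ, as a functional on C(X,ℝ) -/
def MAfun (ω : S.Z) (φ : S.D) : C(S.X, ℝ) →ₗ[ℝ] ℝ := (S.Vol ω)⁻¹ • S.wedge fun _ => ω + S.ddc φ

/-- μ_ω = V_ω⁻¹ ωⁿ -/
def muOmega (ω : S.Z) : C(S.X, ℝ) →ₗ[ℝ] ℝ := (S.Vol ω)⁻¹ • S.wedge fun _ => ω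

/-- the Dirichlet functional J_ω(φ,ψ) -/
def Jfun (ω : S.Z) (φ ψ : S.D) : ℝ :=
  S.En ω φ - S.En ω ψ + S.MAfun ω φ ((ψ : C(S.X, ℝ)) - (φ : C(S.X, ℝ)))

/-- J_ω(φ) := J_ω(0,φ) = ∫φ dμ_ω − E_ω(φ) -/
def Jnorm (ω : S.Z) (φ : S.D) : ℝ := S.muOmega ω (φ : C(S.X, ℝ)) - S.En ω φ

/-- probability measures, encoded as positive normalized functionals on C(X,ℝ) -/
def isProb (μ : C(S.X, ℝ) →ₗ[ℝ] ℝ) : Prop :=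
  (∀ f : C(S.X, ℝ), 0 ≤ f → 0 ≤ μ f) ∧ μ S.one = 1

/-- the space 𝓜 of Radon probability measures -/
abbrev M := {μ : C(S.X, ℝ) →ₗ[ℝ] ℝ // S.isProb μ}

/-- the defining set for the energy J_ω(μ) -/
def Jset (ω : S.Z) (μ : C(S.X, ℝ) →ₗ[ℝ] ℝ) : Set ℝ :=
  {x | ∃ φ ∈ S.psh ω, x = S.En ω φ - μ (φ : C(S.X, ℝ))}

/-- μ has finite energy: J_ω(μ) < ∞ -/
def finEnergy (ω : S.Z) (μ : C(S.X, ℝ) →ₗ[ℝ] ℝ) : Prop := BddAbove (S.Jset ω μ)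

/-- the energy J_ω(μ) of a measure -/
def Jmes (ω : S.Z) (μ : C(S.X, ℝ) →ₗ[ℝ] ℝ) : ℝ := sSup (S.Jset ω μ)

/-- the relative energy J_ω(μ,ψ) -/
def JmesRel (ω : S.Z) (μ : C(S.X, ℝ) →ₗ[ℝ] ℝ) (ψ : S.D) : ℝ :=
  sSup {x | ∃ φ ∈ S.psh ω, x = S.En ω φ - S.En ω ψ + μ ((ψ : C(S.X, ℝ)) - (φ : C(S.X, ℝ)))}

/-- the space 𝓜¹_ω of measures of finite energy -/
abbrev M1 (ω : S.Z) := {μ : S.M // S.finEnergy ω μ.1}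

/-- the weak topology on 𝓜 -/
def weakTop : TopologicalSpace S.M :=
  TopologicalSpace.induced (fun μ (f : C(S.X, ℝ)) => μ.1 f) inferInstance

/-- the strong topology on 𝓜¹_ω: coarsest refinement of the weak topology making J_ω continuous -/
def strongTop (ω : S.Z) : TopologicalSpace (S.M1 ω) :=
  (TopologicalSpace.induced (fun μ : S.M1 ω => μ.1) S.weakTop) ⊓
    TopologicalSpace.induced (fun μ : S.M1 ω => S.Jmes ω μ.1.1) inferInstance

/-- the defining set for T_ω -/
def Tset (ω : S.Z) : Set ℝ :=
  {x | ∃ φ ∈ S.psh ω, x = (⨆ p : S.X, (φ : C(S.X, ℝ)) p) - S.muOmega ω (φ : C(S.X, ℝ))}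

/-- the submean value property for ω: T_ω < ∞ -/
def submeanBdd (ω : S.Z) : Prop := BddAbove (S.Tset ω)

/-- T_ω -/
def Tsup (ω : S.Z) : ℝ := sSup (S.Tset ω)

/-- commensurability of two semipositive forms: finite Thompson distance -/
def commensurable (ω ω' : S.Z) : Prop :=
  ∃ δ : ℝ, 0 ≤ δ ∧ Real.exp (-δ) • ω ≤ ω' ∧ ω' ≤ Real.exp δ • ω

/-- the Thompson distance -/
def dT (ω ω' : S.Z) : ℝ :=
  sInf {δ : ℝ | 0 ≤ δ ∧ Real.exp (-δ) • ω ≤ ω' ∧ ω' ≤ Real.exp δ • ω}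

/-- θ is ω-bounded, i.e. ‖θ‖_ω < ∞ -/
def bddBy (ω θ : S.Z) : Prop := ∃ C : ℝ, 0 ≤ C ∧ -(C • ω) ≤ θ ∧ θ ≤ C • ω

/-- ‖θ‖_ω -/
def znorm (ω θ : S.Z) : ℝ := sInf {C : ℝ | 0 ≤ C ∧ -(C • ω) ≤ θ ∧ θ ≤ C • ω}

/-- 𝒟_ω admits maxima -/
def admitsMaxima (ω : S.Z) : Prop :=
  ∀ φ ∈ S.psh ω, ∀ ψ ∈ S.psh ω, ∀ f : S.D,
    (∀ x : S.X, max ((φ : C(S.X, ℝ)) x) ((ψ : C(S.X, ℝ)) x) < (f : C(S.X, ℝ)) x) →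
    ∃ τ ∈ S.psh ω,
      (∀ x : S.X, max ((φ : C(S.X, ℝ)) x) ((ψ : C(S.X, ℝ)) x) ≤ (τ : C(S.X, ℝ)) x) ∧
      ∀ x : S.X, (τ : C(S.X, ℝ)) x < (f : C(S.X, ℝ)) x

/-- the orthogonality property for ω -/
def orthogonal (ω : S.Z) : Prop :=
  S.admitsMaxima ω ∧
    ∀ f : S.D, ∀ ε : ℝ, 0 < ε →
      ∃ φ₀ ∈ S.psh ω, (∀ x : S.X, (φ₀ : C(S.X, ℝ)) x < (f : C(S.X, ℝ)) x) ∧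
        ∀ φ ∈ S.psh ω, (∀ x : S.X, (φ₀ : C(S.X, ℝ)) x ≤ (φ : C(S.X, ℝ)) x) →
          (∀ x : S.X, (φ : C(S.X, ℝ)) x < (f : C(S.X, ℝ)) x) →
          S.MAfun ω φ ((f : C(S.X, ℝ)) - (φ : C(S.X, ℝ))) ≤ ε

/-- the extended energy Ẽ_ω(f) for f ∈ C⁰(X) -/
def EnExt (ω : S.Z) (f : C(S.X, ℝ)) : ℝ :=
  sSup {x | ∃ φ ∈ S.psh ω, (φ : C(S.X, ℝ)) ≤ f ∧ x = S.En ω φ}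

/-- the metric dd_ω on measures -/
def ddMetric (ω : S.Z) (μ ν : C(S.X, ℝ) →ₗ[ℝ] ℝ) : ℝ :=
  sSup {x | ∃ φ ∈ S.psh ω, S.Jnorm ω φ ≤ 1 ∧ x = |μ (φ : C(S.X, ℝ)) - ν (φ : C(S.X, ℝ))|}

/-- the characterizing property of the Dirichlet quasi-metric d_ω on 𝓜¹_ω -/
def isDirichlet (ω : S.Z) (d : S.M1 ω → S.M1 ω → ℝ) : Prop :=
  (∀ μ ν, 0 ≤ d μ ν) ∧
  (@Continuous (S.M1 ω × S.M1 ω) ℝ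
    (@instTopologicalSpaceProd _ _ (S.strongTop ω) (S.strongTop ω)) _ fun p => d p.1 p.2) ∧
  ∀ φ ∈ S.psh ω, ∀ ψ ∈ S.psh ω, ∀ μ ν : S.M1 ω,
    μ.1.1 = S.MAfun ω φ → ν.1.1 = S.MAfun ω ψ → d μ ν = S.Jfun ω φ ψ

/-- the characterizing property of the θ-twisted energy J_ω^θ on 𝓜¹ -/
def isTwisted (ω θ : S.Z) (Jt : S.M1 ω → ℝ) : Prop :=
  (@Continuous _ _ (S.strongTop ω) _ Jt) ∧
  ∀ φ ∈ S.psh ω, ∀ ν : S.M1 ω, ν.1.1 = S.MAfun ω φ →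
    Jt ν = deriv (fun t : ℝ => S.En (ω + t • θ) φ) 0

end PPSetup

/-- Every element of Z is a difference of two nonnegative elements. -/
lemma pos_diff (S : PPSetup) (z : S.Z) : ∃ p q : S.Z, 0 ≤ p ∧ 0 ≤ q ∧ z = p - q := by
  let W : Submodule ℝ S.Z :=
    { carrier := {z | ∃ p q : S.Z, 0 ≤ p ∧ 0 ≤ q ∧ z = p - q}
      add_mem' := by
        rintro a b ⟨p, q, hp, hq, rfl⟩ ⟨p', q', hp', hq', rfl⟩
        exact ⟨p + p', q + q', add_nonneg hp hp', add_nonneg hq hq', by abel⟩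
      zero_mem' := ⟨0, 0, le_refl _, le_refl _, by simp⟩
      smul_mem' := by
        rintro c a ⟨p, q, hp, hq, rfl⟩
        rcases le_total 0 c with hc | hc
        · exact ⟨c • p, c • q, smul_nonneg hc hp, smul_nonneg hc hq, by rw [smul_sub]⟩
        · refine ⟨(-c) • q, (-c) • p, smul_nonneg (neg_nonneg.mpr hc) hq,
            smul_nonneg (neg_nonneg.mpr hc) hp, ?_⟩
          module }
  have hspan : Submodule.span ℝ {θ : S.Z | 0 ≤ θ} ≤ W := by
    apply Submodule.span_le.mpr
    intro x hx
    exact ⟨x, 0, hx, le_refl _, by simp⟩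
  have : z ∈ W := hspan (S.pos_spans ▸ Submodule.mem_top)
  exact this

lemma psh_smul (S : PPSetup) (θ : S.Z) {t : ℝ} (ht : 0 < t) :
    S.psh (t • θ) = (fun φ : S.D => t • φ) '' S.psh θ := by
  ext φ
  constructor
  · intro hφ
    refine ⟨t⁻¹ • φ, ?_, smul_inv_smul₀ ht.ne' φ⟩
    show 0 ≤ θ + S.ddc (t⁻¹ • φ)
    have h : θ + S.ddc (t⁻¹ • φ) = t⁻¹ • (t • θ + S.ddc φ) := by
      rw [map_smul, smul_add, smul_smul, inv_mul_cancel₀ ht.ne', one_smul]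
    rw [h]
    exact smul_nonneg (inv_nonneg.mpr ht.le) hφ
  · rintro ⟨ψ, hψ, rfl⟩
    show 0 ≤ t • θ + S.ddc (t • ψ)
    have h : t • θ + S.ddc (t • ψ) = t • (θ + S.ddc ψ) := by
      rw [map_smul, smul_add]
    rw [h]
    exact smul_nonneg ht.le hψ

lemma statement2_main (S : PPSetup) (θ : S.Z) (hθ : S.cls θ ∈ S.Pos) (f : S.D) :
    ∃ t : ℝ, 0 < t ∧
      S.psh (t • θ) = (fun φ : S.D => t • φ) '' S.psh θ ∧
      ∃ fp ∈ S.psh (t • θ), ∃ fm ∈ S.psh (t • θ), f = fp - fm := by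
  obtain ⟨P, N, hP, hN, hPN⟩ := pos_diff S (S.ddc f)
  obtain ⟨ε, hε, H⟩ := hθ (Submodule.Quotient.mk N)
  obtain ⟨ρ, hρ, hcls⟩ := H (-ε) (by rw [abs_neg, abs_of_pos hε])
  have hmk : S.cls θ + (-ε) • (Submodule.Quotient.mk N : S.HBC)
      = Submodule.Quotient.mk (θ - ε • N) := by
    show Submodule.Quotient.mk θ + _ = _
    rw [← Submodule.Quotient.mk_smul, ← Submodule.Quotient.mk_add]
    show _ = Submodule.Quotient.mk (θ - ε • N)
    rw [neg_smul, ← sub_eq_add_neg]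
  rw [hmk] at hcls
  have hrange : ρ - (θ - ε • N) ∈ LinearMap.range S.ddc :=
    (Submodule.Quotient.eq _).mp hcls
  obtain ⟨h, hh⟩ := hrange
  -- hh : S.ddc h = ρ - (θ - ε • N)
  set t : ℝ := ε⁻¹ with htdef
  have ht : 0 < t := inv_pos.mpr hε
  have htε : t • (ε • N) = N := by
    rw [smul_smul, inv_mul_cancel₀ hε.ne', one_smul]
  refine ⟨t, ht, psh_smul S θ ht, t • h + f, ?_, t • h, ?_, by abel⟩
  · show 0 ≤ t • θ + S.ddc (t • h + f)
    have key : t • θ + S.ddc (t • h + f) = t • ρ + P := by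
      rw [map_add, map_smul, hh, hPN, smul_sub, smul_sub, htε]
      abel
    rw [key]
    exact add_nonneg (smul_nonneg ht.le hρ) hP
  · show 0 ≤ t • θ + S.ddc (t • h)
    have key : t • θ + S.ddc (t • h) = t • ρ + N := by
      rw [map_smul, hh, smul_sub, smul_sub, htε]
      abel
    rw [key]
    exact add_nonneg (smul_nonneg ht.le hρ) hN

/-- If [θ] ∈ Pos(X), then every f ∈ 𝒟 can be written f = f⁺ − f⁻ with
f⁺, f⁻ ∈ 𝒟_{tθ} = t·𝒟_θ for some t > 0; in particular 𝒟_θ spans 𝒟. -/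
theorem statement2 (S : PPSetup) (θ : S.Z) (hθ : S.cls θ ∈ S.Pos) :
    (∀ f : S.D, ∃ t : ℝ, 0 < t ∧
      S.psh (t • θ) = (fun φ : S.D => t • φ) '' S.psh θ ∧
      ∃ fp ∈ S.psh (t • θ), ∃ fm ∈ S.psh (t • θ), f = fp - fm) ∧
    Submodule.span ℝ (S.psh θ) = ⊤ := by
  refine ⟨statement2_main S θ hθ, ?_⟩
  rw [eq_top_iff]
  intro f _
  obtain ⟨t, ht, himg, fp, hfp, fm, hfm, heq⟩ := statement2_main S θ hθ f
  rw [himg] at hfp hfm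
  obtain ⟨a, ha, rfl⟩ := hfp
  obtain ⟨b, hb, rfl⟩ := hfm
  rw [heq]
  exact sub_mem (Submodule.smul_mem _ t (Submodule.subset_span ha))
    (Submodule.smul_mem _ t (Submodule.subset_span hb))
end
end

section
/- In the synthetic setup, every finite subset {α₁,…,α_r} of Pos(X) can be represented by pairwise commensurable forms in 𝒵₊; that is, there exist ω₁,…,ω_r ∈ 𝒵₊ with [ωᵢ] = αᵢ and d_T(ωᵢ,ω_j) < ∞ for all i, j. -/
open scoped BigOperators
noncomputable section

/-- Every finite subset {α₁,…,α_r} of Pos(X) can be represented by pairwise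
commensurable forms in 𝒵₊. -/
theorem statement3 (S : PPSetup) (r : ℕ) (α : Fin r → S.HBC) (hα : ∀ i, α i ∈ S.Pos) :
    ∃ ω : Fin r → S.Z, (∀ i, 0 ≤ ω i) ∧ (∀ i, S.cls (ω i) = α i) ∧
      ∀ i j, S.commensurable (ω i) (ω j) := by
  rcases Nat.eq_zero_or_pos r with hr | hr
  · subst hr
    exact ⟨fun i => 0, fun i => i.elim0, fun i => i.elim0, fun i => i.elim0⟩
  haveI : Nonempty (Fin r) := Fin.pos_iff_nonempty.mp hr
  have hr' : (0 : ℝ) < r := by exact_mod_cast hr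
  set s : S.HBC := ∑ j, α j with hs
  choose ε εpos hP using fun i => hα i s
  set t : ℝ := min (Finset.univ.inf' Finset.univ_nonempty ε) (1 / (2 * r)) with ht
  have ht0 : 0 < t := by
    apply lt_min
    · exact (Finset.lt_inf'_iff _).mpr fun i _ => εpos i
    · positivity
  have htε : ∀ i, t ≤ ε i := fun i =>
    le_trans (min_le_left _ _) (Finset.inf'_le _ (Finset.mem_univ i))
  have hrt : (r : ℝ) * t < 1 := by
    have h2 : t ≤ 1 / (2 * r) := min_le_right _ _
    have : (r : ℝ) * t ≤ r * (1 / (2 * r)) := by nlinarith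
    have hhalf : (r : ℝ) * (1 / (2 * r)) = 1 / 2 := by field_simp
    nlinarith
  have h1rt : 0 < 1 - (r : ℝ) * t := by linarith
  set δ : ℝ := t / (1 - (r : ℝ) * t) with hδdef
  have hδ0 : 0 < δ := div_pos ht0 h1rt
  have hδt : δ * (1 - (r : ℝ) * t) = t := div_mul_cancel₀ _ h1rt.ne'
  choose η ηpos ηcls using fun i => hP i (-t)
    (by rw [abs_neg, abs_of_pos ht0]; exact htε i)
  set Sg : S.Z := ∑ k, η k with hSg
  have Sgpos : 0 ≤ Sg := Finset.sum_nonneg fun k _ => ηpos k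
  have ηleSg : ∀ k, η k ≤ Sg :=
    fun k => Finset.single_le_sum (fun j _ => ηpos j) (Finset.mem_univ k)
  refine ⟨fun i => η i + δ • Sg, fun i => add_nonneg (ηpos i) (smul_nonneg hδ0.le Sgpos),
    ?_, ?_⟩
  · -- classes
    intro i
    have hlin : S.cls (η i + δ • Sg) = S.cls (η i) + δ • ∑ k, S.cls (η k) := by
      show (LinearMap.range S.ddc).mkQ (η i + δ • Sg)
          = (LinearMap.range S.ddc).mkQ (η i) + δ • ∑ k, (LinearMap.range S.ddc).mkQ (η k)
      rw [map_add, map_smul, hSg, map_sum]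
    rw [hlin]
    simp only [ηcls]
    rw [Finset.sum_add_distrib, Finset.sum_const, Finset.card_univ, Fintype.card_fin, hs]
    rw [← Nat.cast_smul_eq_nsmul ℝ, smul_smul, smul_add, smul_smul]
    have expand : -t • (∑ j, α j) + (δ • ∑ j, α j + (δ * ((r : ℝ) * -t)) • ∑ j, α j)
        = (-t + (δ + δ * ((r : ℝ) * -t))) • (∑ j, α j) := by
      rw [add_smul, add_smul]
    have hc : -t + (δ + δ * ((r : ℝ) * -t)) = 0 := by
      have h9 : δ + δ * ((r : ℝ) * -t) = δ * (1 - (r : ℝ) * t) := by ring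
      rw [h9, hδt]; ring
    rw [add_assoc, expand, hc, zero_smul, add_zero]
  · -- commensurability
    set K : ℝ := (1 + δ) / δ with hK
    have hK1 : 1 < K := by
      rw [hK, lt_div_iff₀ hδ0]; linarith
    have hK0 : 0 < K := lt_trans one_pos hK1
    have key : ∀ i j : Fin r, η i + δ • Sg ≤ K • (η j + δ • Sg) := by
      intro i j
      have h1 : η i + δ • Sg ≤ (1 + δ) • Sg := by
        rw [add_smul, one_smul]
        exact add_le_add_left (ηleSg i) _
      have h2 : δ • Sg ≤ η j + δ • Sg := le_add_of_nonneg_left (ηpos j)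
      have h3 : Sg ≤ δ⁻¹ • (η j + δ • Sg) := by
        have := smul_le_smul_of_nonneg_left h2 (inv_nonneg.mpr hδ0.le)
        rwa [smul_smul, inv_mul_cancel₀ hδ0.ne', one_smul] at this
      have h4 : (1 + δ) • Sg ≤ (1 + δ) • (δ⁻¹ • (η j + δ • Sg)) :=
        smul_le_smul_of_nonneg_left h3 (by linarith)
      have h5 : (1 + δ) • (δ⁻¹ • (η j + δ • Sg)) = K • (η j + δ • Sg) := by
        rw [smul_smul, hK, div_eq_mul_inv]
      exact le_trans h1 (h4.trans_eq h5)
    intro i j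
    refine ⟨Real.log K, Real.log_nonneg hK1.le, ?_, ?_⟩
    · rw [Real.exp_neg, Real.exp_log hK0]
      have := smul_le_smul_of_nonneg_left (key i j) (inv_nonneg.mpr hK0.le)
      rwa [smul_smul, inv_mul_cancel₀ hK0.ne', one_smul] at this
    · rw [Real.exp_log hK0]
      exact key j i
end
end

section
/- In the synthetic setup, fix ω ∈ 𝒵₊ with [ω] ∈ Pos(X), assume 𝒟_ω admits maxima, and define Ẽ_ω(f) := sup{E_ω(φ) : φ ∈ 𝒟_ω, φ ≤ f} for f ∈ C⁰(X). Then the following are equivalent: (i) ω has the orthogonality property; (ii) there is a constant cₙ > 0 depending only on n such that for any f ∈ 𝒟 written f = f⁺ − f⁻ with f⁺, f⁻ ∈ 𝒟_{Cω} for some C > 0, one has |Ẽ_ω(φ+f) − E_ω(φ) − ∫ f dMA_ω(φ)| ≤ cₙ·C·sup|f| for all φ ∈ 𝒟_ω; (iii) in the same setting as (ii), |Ẽ_ω(φ+tf) − E_ω(φ) − t∫ f dMA_ω(φ)| ≤ cₙ·C·t²·sup|f| for all φ ∈ 𝒟_ω and t ∈ ℝ. -/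
open scoped BigOperators
noncomputable section

namespace PPSetup

section Aux

lemma fin_insertNth_eq_comp_cycleRange {α : Type*} {n : ℕ} (i : Fin (n + 1)) (d : α)
    (v : Fin n → α) : i.insertNth d v = (Fin.cons d v) ∘ (Fin.cycleRange i) := by
  funext j
  refine Fin.succAboveCases i ?_ ?_ j
  · simp [Fin.insertNth_apply_same, Fin.cycleRange_self]
  · intro k
    simp [Fin.insertNth_apply_succAbove, Fin.cycleRange_succAbove]

lemma fin_update_eq_insertNth {α : Type*} {n : ℕ} (v : Fin (n + 1) → α) (i : Fin (n + 1))
    (e : α) : Function.update v i e = i.insertNth e (fun j => v (i.succAbove j)) := by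
  funext j
  refine Fin.succAboveCases i ?_ ?_ j
  · simp
  · intro k
    rw [Function.update_of_ne (Fin.succAbove_ne i k), Fin.insertNth_apply_succAbove]

lemma fin_snoc_eq_comp_rotate {α : Type*} {n : ℕ} (d : α) (v : Fin n → α) :
    Fin.snoc v d = (Fin.cons d v) ∘ (finRotate (n + 1)) := by
  funext j
  refine Fin.lastCases ?_ ?_ j
  · simp [finRotate_succ_apply]
  · intro k
    simp [finRotate_succ_apply, Fin.coeSucc_eq_succ]

variable (S : PPSetup)

lemma wedge_insertNth (i : Fin (S.m + 1)) (d : S.Z) (v : Fin S.m → S.Z) :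
    S.wedge (i.insertNth d v) = S.wedge (Fin.cons d v) := by
  rw [fin_insertNth_eq_comp_cycleRange]
  exact S.wedge_symm (Fin.cycleRange i) (Fin.cons d v)

lemma wedge_update (v : Fin (S.m + 1) → S.Z) (i : Fin (S.m + 1)) (e : S.Z) :
    S.wedge (Function.update v i e) = S.wedge (Fin.cons e (fun j => v (i.succAbove j))) := by
  rw [fin_update_eq_insertNth, wedge_insertNth]

lemma wedge_snoc (v : Fin S.m → S.Z) (d : S.Z) :
    S.wedge (Fin.snoc v d) = S.wedge (Fin.cons d v) := by
  rw [fin_snoc_eq_comp_rotate]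
  exact S.wedge_symm (finRotate (S.m + 1)) (Fin.cons d v)

lemma wedge_cons_ddc_one (χ : S.D) (θ : Fin S.m → S.Z) :
    S.wedge (Fin.cons (S.ddc χ) θ) S.one = 0 := by
  have h : S.wedge (Fin.cons (S.ddc χ) θ) ((S.constD 1 : S.D) : C(S.X, ℝ))
      = S.wedge (Fin.cons (S.ddc (S.constD 1)) θ) (χ : C(S.X, ℝ)) :=
    S.hodge_symm θ (S.constD 1) χ
  have h1 : S.ddc (S.constD 1) = 0 := S.ddc_const 1
  have h2 : ((S.constD 1 : S.D) : C(S.X, ℝ)) = S.one := rfl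
  rw [h2, h1] at h
  rw [h]
  have h3 : S.wedge (Fin.cons (0 : S.Z) θ) = 0 :=
    S.wedge.map_coord_zero (m := Fin.cons 0 θ) 0 (by simp)
  rw [h3, LinearMap.zero_apply]

/-- the master telescoping lemma -/
lemma wedge_telescope (v w : Fin (S.m + 1) → S.Z) (g : C(S.X, ℝ)) :
    S.wedge v g = S.wedge w g + ∑ k : Fin (S.m + 1),
      S.wedge (Fin.cons (v k - w k)
        (fun j => if ((k.succAbove j : Fin (S.m + 1)) : ℕ) < (k : ℕ) then v (k.succAbove j)
          else w (k.succAbove j))) g := by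
  set A : ℕ → ℝ := fun t => S.wedge (fun j => if (j : ℕ) < t then v j else w j) g with hA
  have h0 : S.wedge w g = A 0 := by
    have hw : (fun j : Fin (S.m + 1) => if (j : ℕ) < 0 then v j else w j) = w := by
      funext j; simp
    simp only [hA, hw]
  have htop : S.wedge v g = A (S.m + 1) := by
    have hv : (fun j : Fin (S.m + 1) => if (j : ℕ) < S.m + 1 then v j else w j) = v := by
      funext j; simp [j.isLt]
    simp only [hA, hv]
  have hstep : ∀ k : Fin (S.m + 1),
      S.wedge (Fin.cons (v k - w k)
        (fun j => if ((k.succAbove j : Fin (S.m + 1)) : ℕ) < (k : ℕ) then v (k.succAbove j)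
          else w (k.succAbove j))) g = A ((k : ℕ) + 1) - A (k : ℕ) := by
    intro k
    set z : Fin (S.m + 1) → S.Z := fun j => if (j : ℕ) < (k : ℕ) then v j else w j with hz
    have hupd : (fun j : Fin (S.m + 1) => if (j : ℕ) < (k : ℕ) + 1 then v j else w j)
        = Function.update z k (v k) := by
      funext j
      rcases eq_or_ne j k with rfl | hne
      · simp [Nat.lt_succ_iff]
      · rw [Function.update_of_ne hne, hz]
        have hvne : (j : ℕ) ≠ (k : ℕ) := fun h => hne (Fin.ext h)
        by_cases hj : (j : ℕ) < (k : ℕ)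
        · simp [hj, Nat.lt_succ_of_lt hj]
        · have hj2 : ¬ (j : ℕ) < (k : ℕ) + 1 := by omega
          simp [hj, hj2]
    have hself : z = Function.update z k (w k) := by
      funext j
      rcases eq_or_ne j k with rfl | hne
      · simp [hz]
      · rw [Function.update_of_ne hne]
    have e1 : A ((k : ℕ) + 1) = S.wedge (Function.update z k (v k)) g := by
      simp only [hA]; rw [← hupd]
    have e2 : A (k : ℕ) = S.wedge (Function.update z k (w k)) g := by
      simp only [hA]; rw [← hself]
    rw [e1, e2, ← LinearMap.sub_apply, ← MultilinearMap.map_update_sub, S.wedge_update]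
  calc S.wedge v g = A (S.m + 1) := htop
    _ = A 0 + ∑ t ∈ Finset.range (S.m + 1), (A (t + 1) - A t) := by
        rw [Finset.sum_range_sub A (S.m + 1)]; ring
    _ = S.wedge w g + ∑ k : Fin (S.m + 1), (A ((k : ℕ) + 1) - A (k : ℕ)) := by
        rw [← h0]
        congr 1
        exact (Fin.sum_univ_eq_sum_range (fun t => A (t + 1) - A t) (S.m + 1)).symm
    _ = S.wedge w g + ∑ k : Fin (S.m + 1),
          S.wedge (Fin.cons (v k - w k)
            (fun j => if ((k.succAbove j : Fin (S.m + 1)) : ℕ) < (k : ℕ) then v (k.succAbove j)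
              else w (k.succAbove j))) g := by
        congr 1
        exact Finset.sum_congr rfl fun k _ => (hstep k).symm

/-- all mixed masses agree -/
lemma wedge_one_eq (v : Fin (S.m + 1) → S.Z) (ω : S.Z)
    (h : ∀ k, ∃ χ : S.D, v k = ω + S.ddc χ) :
    S.wedge v S.one = S.Vol ω := by
  rw [S.wedge_telescope v (fun _ => ω) S.one]
  have hz : ∀ k : Fin (S.m + 1),
      S.wedge (Fin.cons (v k - ω)
        (fun j => if ((k.succAbove j : Fin (S.m + 1)) : ℕ) < (k : ℕ) then v (k.succAbove j)
          else ω)) S.one = 0 := by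
    intro k
    obtain ⟨χ, hχ⟩ := h k
    have hd : v k - ω = S.ddc χ := by rw [hχ]; abel
    rw [hd]
    exact S.wedge_cons_ddc_one χ _
  rw [Finset.sum_congr rfl fun k _ => hz k]
  simp [Vol]

/-- bound for positive wedge functionals -/
lemma wedge_abs_le (v : Fin (S.m + 1) → S.Z) (hv : ∀ k, 0 ≤ v k) (g : C(S.X, ℝ)) :
    |S.wedge v g| ≤ S.wedge v S.one * ‖g‖ := by
  have hplus : (0 : C(S.X, ℝ)) ≤ ‖g‖ • S.one + g := by
    rw [ContinuousMap.le_def]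
    intro x
    have hx : ‖g x‖ ≤ ‖g‖ := g.norm_coe_le_norm x
    rw [Real.norm_eq_abs] at hx
    have := abs_le.1 hx
    simp only [ContinuousMap.zero_apply, ContinuousMap.add_apply, ContinuousMap.smul_apply,
      PPSetup.one, ContinuousMap.const_apply, smul_eq_mul, mul_one]
    linarith [this.1]
  have hminus : (0 : C(S.X, ℝ)) ≤ ‖g‖ • S.one - g := by
    rw [ContinuousMap.le_def]
    intro x
    have hx : ‖g x‖ ≤ ‖g‖ := g.norm_coe_le_norm x
    rw [Real.norm_eq_abs] at hx
    have := abs_le.1 hx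
    simp only [ContinuousMap.zero_apply, ContinuousMap.sub_apply, ContinuousMap.smul_apply,
      PPSetup.one, ContinuousMap.const_apply, smul_eq_mul, mul_one]
    linarith [this.2]
  have p1 := S.wedge_pos v hv _ hplus
  have p2 := S.wedge_pos v hv _ hminus
  rw [map_add, map_smul, smul_eq_mul] at p1
  rw [map_sub, map_smul, smul_eq_mul] at p2
  exact abs_le.2 ⟨by linarith, by linarith⟩

end Aux

end PPSetup
namespace PPSetup

section Energy

variable (S : PPSetup)

lemma coe_succAbove_of_lt {i : Fin (S.m + 2)} {j : Fin (S.m + 1)} (h : (j : ℕ) < (i : ℕ)) :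
    ((i.succAbove j : Fin (S.m + 2)) : ℕ) = (j : ℕ) := by
  rw [Fin.succAbove_of_castSucc_lt _ _ (by rwa [Fin.lt_def, Fin.coe_castSucc])]
  simp

lemma coe_succAbove_of_ge {i : Fin (S.m + 2)} {j : Fin (S.m + 1)} (h : (i : ℕ) ≤ (j : ℕ)) :
    ((i.succAbove j : Fin (S.m + 2)) : ℕ) = (j : ℕ) + 1 := by
  rw [Fin.succAbove_of_le_castSucc _ _ (by rwa [Fin.le_def, Fin.coe_castSucc])]
  simp

lemma epow_formula (ω : S.Z) (χ : S.D) :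
    S.epow ω χ = ∑ i : Fin (S.m + 2),
      S.wedge (fun j => if (j : ℕ) < (i : ℕ) then ω else ω + S.ddc χ) (χ : C(S.X, ℝ)) := by
  unfold epow epair
  refine Finset.sum_congr rfl fun i _ => ?_
  have hv : (fun j : Fin (S.m + 1) =>
      if ((i.succAbove j : Fin (S.m + 2)) : ℕ) < (i : ℕ) then ω else ω + S.ddc χ)
      = fun j : Fin (S.m + 1) => if (j : ℕ) < (i : ℕ) then ω else ω + S.ddc χ := by
    funext j
    by_cases h : (j : ℕ) < (i : ℕ)
    · rw [if_pos h, if_pos]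
      rw [S.coe_succAbove_of_lt h]; exact h
    · rw [if_neg h, if_neg]
      rw [S.coe_succAbove_of_ge (le_of_not_gt h)]
      omega
  exact congrArg (fun L : C(S.X, ℝ) →ₗ[ℝ] ℝ => L (χ : C(S.X, ℝ))) (congrArg S.wedge hv)

/-- mixed wedge pattern ω^p a^q b^(rest) as a functional -/
def Wfun (ω a b : S.Z) (p q : ℕ) : C(S.X, ℝ) →ₗ[ℝ] ℝ :=
  S.wedge (fun j : Fin (S.m + 1) => if (j : ℕ) < p then ω else if (j : ℕ) < p + q then a else b)

lemma Wfun_step (ω a b : S.Z) (p q : ℕ) (h : p + q ≤ S.m) :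
    S.Wfun ω a b p (q + 1) = S.Wfun ω a b p q + S.wedge (Fin.cons (a - b)
      (fun j : Fin S.m => if (j : ℕ) < p then ω else if (j : ℕ) < p + q then a else b)) := by
  unfold Wfun
  have hlt : p + q < S.m + 1 := by omega
  set i : Fin (S.m + 1) := ⟨p + q, hlt⟩ with hi
  set z : Fin (S.m + 1) → S.Z :=
    (fun j : Fin (S.m + 1) => if (j : ℕ) < p then ω else if (j : ℕ) < p + q then a else b) with hz
  have h1 : (fun j : Fin (S.m + 1) =>
      if (j : ℕ) < p then ω else if (j : ℕ) < p + (q + 1) then a else b)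
      = Function.update z i a := by
    funext j
    rcases eq_or_ne j i with rfl | hne
    · have e1 : ¬ ((i : ℕ) < p) := by show ¬ (p + q < p); omega
      have e2 : (i : ℕ) < p + (q + 1) := by show p + q < p + (q + 1); omega
      rw [Function.update_self, if_neg e1, if_pos e2]
    · rw [Function.update_of_ne hne, hz]
      have hvne : (j : ℕ) ≠ p + q := fun hh => hne (Fin.ext (by rw [hh, hi]))
      by_cases hj1 : (j : ℕ) < p
      · simp [hj1]
      · by_cases h2 : (j : ℕ) < p + q
        · have h3 : (j : ℕ) < p + (q + 1) := by omega
          simp [hj1, h2, h3]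
        · have h3 : ¬ (j : ℕ) < p + (q + 1) := by omega
          simp [hj1, h2, h3]
  have h2 : Function.update z i b = z := by
    funext j
    rcases eq_or_ne j i with rfl | hne
    · have hp : ¬ ((i : ℕ) < p) := by show ¬ (p + q < p); omega
      have hq : ¬ ((i : ℕ) < p + q) := by show ¬ (p + q < p + q); omega
      rw [Function.update_self]
      show b = if (i : ℕ) < p then ω else if (i : ℕ) < p + q then a else b
      rw [if_neg hp, if_neg hq]
    · rw [Function.update_of_ne hne]
  have hadd : S.wedge (Function.update z i a)
      = S.wedge (Function.update z i (a - b)) + S.wedge (Function.update z i b) := by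
    have hab : a - b + b = a := by abel
    rw [← MultilinearMap.map_update_add, hab]
  have htail : (fun j : Fin S.m => z (i.succAbove j))
      = fun j : Fin S.m => if (j : ℕ) < p then ω else if (j : ℕ) < p + q then a else b := by
    funext j
    simp only [hz]
    by_cases hj : (j : ℕ) < p + q
    · have hcast : ((i.succAbove j : Fin (S.m + 1)) : ℕ) = (j : ℕ) := by
        rw [Fin.succAbove_of_castSucc_lt _ _ ?_]
        · simp
        · rw [Fin.lt_def, Fin.coe_castSucc]; show (j : ℕ) < p + q; exact hj
      rw [hcast]
    · have hcast : ((i.succAbove j : Fin (S.m + 1)) : ℕ) = (j : ℕ) + 1 := by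
        rw [Fin.succAbove_of_le_castSucc _ _ ?_]
        · simp
        · rw [Fin.le_def, Fin.coe_castSucc]; show p + q ≤ (j : ℕ); omega
      rw [hcast, if_neg (by omega : ¬ ((j : ℕ) + 1 < p)),
        if_neg (by omega : ¬ ((j : ℕ) + 1 < p + q)),
        if_neg (by omega : ¬ ((j : ℕ) < p)), if_neg hj]
  rw [h1, hadd, h2, S.wedge_update, htail, add_comm]

end Energy

end PPSetup
namespace PPSetup

section EnergyDiff

variable (S : PPSetup)

lemma Wfun_tel (ω a b : S.Z) (p : ℕ) : ∀ K, p + K ≤ S.m + 1 →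
    S.Wfun ω a b p K = S.Wfun ω a b p 0 + ∑ q ∈ Finset.range K,
      S.wedge (Fin.cons (a - b)
        (fun j : Fin S.m => if (j : ℕ) < p then ω else if (j : ℕ) < p + q then a else b)) := by
  intro K
  induction K with
  | zero => intro _; simp
  | succ K ih =>
    intro hK
    rw [S.Wfun_step ω a b p K (by omega), ih (by omega), Finset.sum_range_succ]
    abel

lemma cons_update_zero' {α : Type*} {n : ℕ} (x z : α) (p : Fin n → α) :
    Function.update (Fin.cons x p : Fin (n + 1) → α) 0 z
      = (Fin.cons z p : Fin (n + 1) → α) := by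
  funext j
  refine Fin.cases ?_ ?_ j
  · simp
  · intro k
    rw [Function.update_of_ne (Fin.succ_ne_zero k), Fin.cons_succ, Fin.cons_succ]

lemma cons_front_split (x y : S.Z) (θ : Fin S.m → S.Z) :
    S.wedge (Fin.cons (x - y) θ) = S.wedge (Fin.cons x θ) - S.wedge (Fin.cons y θ) := by
  have h1 : (Fin.cons (x - y) θ : Fin (S.m + 1) → S.Z)
      = Function.update (Fin.cons x θ : Fin (S.m + 1) → S.Z) 0 (x - y) :=
    (cons_update_zero' x (x - y) θ).symm
  have h2 : Function.update (Fin.cons x θ : Fin (S.m + 1) → S.Z) 0 x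
      = (Fin.cons x θ : Fin (S.m + 1) → S.Z) := cons_update_zero' x x θ
  have h3 : Function.update (Fin.cons x θ : Fin (S.m + 1) → S.Z) 0 y
      = (Fin.cons y θ : Fin (S.m + 1) → S.Z) := cons_update_zero' x y θ
  rw [h1, MultilinearMap.map_update_sub, h2, h3]

lemma cons_omega_pat (ω a b : S.Z) (p q : ℕ) :
    Fin.cons ω (fun j : Fin S.m => if (j : ℕ) < p then ω else if (j : ℕ) < p + q then a else b)
    = fun j : Fin (S.m + 1) =>
        if (j : ℕ) < p + 1 then ω else if (j : ℕ) < (p + 1) + q then a else b := by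
  funext j
  refine Fin.cases ?_ ?_ j
  · rw [Fin.cons_zero]
    have : ((0 : Fin (S.m + 1)) : ℕ) < p + 1 := by simp
    rw [if_pos this]
  · intro k
    rw [Fin.cons_succ]
    have hval : ((k.succ : Fin (S.m + 1)) : ℕ) = (k : ℕ) + 1 := rfl
    rw [hval]
    by_cases h1 : (k : ℕ) < p
    · have e1 : (k : ℕ) + 1 < p + 1 := by omega
      rw [if_pos h1, if_pos e1]
    · have e1 : ¬ ((k : ℕ) + 1 < p + 1) := by omega
      rw [if_neg h1, if_neg e1]
      by_cases h2 : (k : ℕ) < p + q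
      · have e2 : (k : ℕ) + 1 < p + 1 + q := by omega
        rw [if_pos h2, if_pos e2]
      · have e2 : ¬ ((k : ℕ) + 1 < p + 1 + q) := by omega
        rw [if_neg h2, if_neg e2]

lemma snoc_b_pat (ω a b : S.Z) (p q : ℕ) (h : p + q ≤ S.m) :
    Fin.snoc (fun j : Fin S.m => if (j : ℕ) < p then ω else if (j : ℕ) < p + q then a else b) b
    = fun j : Fin (S.m + 1) => if (j : ℕ) < p then ω else if (j : ℕ) < p + q then a else b := by
  funext j
  refine Fin.lastCases ?_ ?_ j
  · rw [Fin.snoc_last]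
    have hval : ((Fin.last S.m : Fin (S.m + 1)) : ℕ) = S.m := rfl
    rw [hval]
    have e1 : ¬ (S.m < p) := by omega
    have e2 : ¬ (S.m < p + q) := by omega
    rw [if_neg e1, if_neg e2]
  · intro k
    rw [Fin.snoc_castSucc]
    have hval : ((k.castSucc : Fin (S.m + 1)) : ℕ) = (k : ℕ) := rfl
    rw [hval]

/-- the key per-term transformation: an integration by parts -/
lemma term_transform (ω : S.Z) (φ ψ : S.D) (p q : ℕ) (h : p + q ≤ S.m) :
    S.wedge (Fin.cons ((ω + S.ddc ψ) - (ω + S.ddc φ))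
        (fun j : Fin S.m => if (j : ℕ) < p then ω
          else if (j : ℕ) < p + q then ω + S.ddc ψ else ω + S.ddc φ)) (φ : C(S.X, ℝ))
    = S.Wfun ω (ω + S.ddc ψ) (ω + S.ddc φ) p q ((ψ : C(S.X, ℝ)) - (φ : C(S.X, ℝ)))
      - S.Wfun ω (ω + S.ddc ψ) (ω + S.ddc φ) (p + 1) q
          ((ψ : C(S.X, ℝ)) - (φ : C(S.X, ℝ))) := by
  set a := ω + S.ddc ψ with ha
  set b := ω + S.ddc φ with hb
  set θ : Fin S.m → S.Z :=
    (fun j : Fin S.m => if (j : ℕ) < p then ω else if (j : ℕ) < p + q then a else b) with hθ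
  have hab : a - b = S.ddc (ψ - φ) := by rw [ha, hb, map_sub]; abel
  have hcoe : ((ψ - φ : S.D) : C(S.X, ℝ)) = (ψ : C(S.X, ℝ)) - (φ : C(S.X, ℝ)) := rfl
  rw [hab, S.hodge_symm θ φ (ψ - φ), hcoe]
  have hd : S.ddc φ = b - ω := by rw [hb]; abel
  rw [hd, S.cons_front_split b ω θ, LinearMap.sub_apply]
  have hb2 : S.wedge (Fin.cons b θ) = S.Wfun ω a b p q := by
    rw [← S.wedge_snoc θ b]
    unfold Wfun
    rw [hθ, S.snoc_b_pat ω a b p q h]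
  have hw2 : S.wedge (Fin.cons ω θ) = S.Wfun ω a b (p + 1) q := by
    unfold Wfun
    rw [hθ, S.cons_omega_pat ω a b p q]
  rw [hb2, hw2]

end EnergyDiff

end PPSetup
namespace PPSetup

section EnergyDiff2

variable (S : PPSetup)

lemma sum_extend (G : ℕ → ℝ) (K N : ℕ) (h : K ≤ N) :
    ∑ q ∈ Finset.range K, G q = ∑ q ∈ Finset.range N, if q < K then G q else 0 := by
  rw [← Finset.sum_filter]
  congr 1
  ext q
  simp only [Finset.mem_filter, Finset.mem_range]
  omega

/-- the fundamental energy difference identity -/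
lemma epow_sub (ω : S.Z) (φ ψ : S.D) :
    S.epow ω ψ - S.epow ω φ = ∑ q ∈ Finset.range (S.m + 2),
      S.Wfun ω (ω + S.ddc ψ) (ω + S.ddc φ) 0 q ((ψ : C(S.X, ℝ)) - (φ : C(S.X, ℝ))) := by
  set a := ω + S.ddc ψ with ha
  set b := ω + S.ddc φ with hb
  set uc := (ψ : C(S.X, ℝ)) - (φ : C(S.X, ℝ)) with huc
  set n := S.m + 1 with hn
  have hψ : S.epow ω ψ = ∑ t ∈ Finset.range (n + 1), S.Wfun ω a b t (n - t) (ψ : C(S.X, ℝ)) := by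
    have h0 := S.epow_formula ω ψ
    rw [← ha] at h0
    rw [h0, Fin.sum_univ_eq_sum_range
      (fun t => S.wedge (fun j : Fin (S.m + 1) => if (j : ℕ) < t then ω else a)
        (ψ : C(S.X, ℝ))) (n + 1)]
    refine Finset.sum_congr rfl fun t ht => ?_
    have ht' : t ≤ n := by have := Finset.mem_range.1 ht; omega
    have hvec : (fun j : Fin (S.m + 1) => if (j : ℕ) < t then ω else a)
        = fun j : Fin (S.m + 1) => if (j : ℕ) < t then ω else
            if (j : ℕ) < t + (n - t) then a else b := by
      funext j
      by_cases hj : (j : ℕ) < t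
      · rw [if_pos hj, if_pos hj]
      · have hjn : (j : ℕ) < n := by have := j.isLt; omega
        rw [if_neg hj, if_neg hj, if_pos (by omega)]
    rw [hvec]
    rfl
  have hφ : S.epow ω φ = ∑ t ∈ Finset.range (n + 1), S.Wfun ω a b t 0 (φ : C(S.X, ℝ)) := by
    have h0 := S.epow_formula ω φ
    rw [← hb] at h0
    rw [h0, Fin.sum_univ_eq_sum_range
      (fun t => S.wedge (fun j : Fin (S.m + 1) => if (j : ℕ) < t then ω else b)
        (φ : C(S.X, ℝ))) (n + 1)]
    refine Finset.sum_congr rfl fun t ht => ?_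
    have hvec : (fun j : Fin (S.m + 1) => if (j : ℕ) < t then ω else b)
        = fun j : Fin (S.m + 1) => if (j : ℕ) < t then ω else
            if (j : ℕ) < t + 0 then a else b := by
      funext j
      by_cases hj : (j : ℕ) < t
      · rw [if_pos hj, if_pos hj]
      · rw [if_neg hj, if_neg hj, if_neg (by omega)]
    rw [hvec]
    rfl
  rw [hψ, hφ, ← Finset.sum_sub_distrib]
  have hterm : ∀ t ∈ Finset.range (n + 1),
      S.Wfun ω a b t (n - t) (ψ : C(S.X, ℝ)) - S.Wfun ω a b t 0 (φ : C(S.X, ℝ))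
      = S.Wfun ω a b t (n - t) uc
        + ∑ q ∈ Finset.range (n - t), (S.Wfun ω a b t q uc - S.Wfun ω a b (t + 1) q uc) := by
    intro t ht
    have ht' : t ≤ n := by have := Finset.mem_range.1 ht; omega
    have e1 := S.Wfun_tel ω a b t (n - t) (by omega)
    have e1' : S.Wfun ω a b t (n - t) (φ : C(S.X, ℝ))
        = S.Wfun ω a b t 0 (φ : C(S.X, ℝ))
          + ∑ q ∈ Finset.range (n - t),
              S.wedge (Fin.cons (a - b) (fun j : Fin S.m =>
                if (j : ℕ) < t then ω else if (j : ℕ) < t + q then a else b)) (φ : C(S.X, ℝ)) := by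
      rw [e1, LinearMap.add_apply]
      congr 1
      exact LinearMap.sum_apply _ _ _
    have e2 : ∀ q ∈ Finset.range (n - t),
        S.wedge (Fin.cons (a - b) (fun j : Fin S.m =>
          if (j : ℕ) < t then ω else if (j : ℕ) < t + q then a else b)) (φ : C(S.X, ℝ))
        = S.Wfun ω a b t q uc - S.Wfun ω a b (t + 1) q uc := by
      intro q hq
      have hq' : q < n - t := Finset.mem_range.1 hq
      have h3 := S.term_transform ω φ ψ t q (by omega)
      rw [← ha, ← hb, ← huc] at h3
      exact h3
    rw [Finset.sum_congr rfl e2] at e1'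
    have e0 : S.Wfun ω a b t (n - t) (ψ : C(S.X, ℝ))
        - S.Wfun ω a b t (n - t) (φ : C(S.X, ℝ)) = S.Wfun ω a b t (n - t) uc := by
      rw [huc, map_sub]
    linarith [e0, e1']
  rw [Finset.sum_congr rfl hterm, Finset.sum_add_distrib]
  have hdouble : ∑ t ∈ Finset.range (n + 1), ∑ q ∈ Finset.range (n - t),
        (S.Wfun ω a b t q uc - S.Wfun ω a b (t + 1) q uc)
      = ∑ q ∈ Finset.range n, (S.Wfun ω a b 0 q uc - S.Wfun ω a b (n - q) q uc) := by
    have h1 : ∀ t ∈ Finset.range (n + 1),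
        ∑ q ∈ Finset.range (n - t), (S.Wfun ω a b t q uc - S.Wfun ω a b (t + 1) q uc)
        = ∑ q ∈ Finset.range n,
            if q < n - t then (S.Wfun ω a b t q uc - S.Wfun ω a b (t + 1) q uc) else 0 :=
      fun t _ => sum_extend _ _ _ (by omega)
    rw [Finset.sum_congr rfl h1, Finset.sum_comm]
    refine Finset.sum_congr rfl fun q hq => ?_
    have hq' : q < n := Finset.mem_range.1 hq
    have h2 : ∑ t ∈ Finset.range (n + 1),
        (if q < n - t then (S.Wfun ω a b t q uc - S.Wfun ω a b (t + 1) q uc) else 0)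
        = ∑ t ∈ Finset.range (n - q), (S.Wfun ω a b t q uc - S.Wfun ω a b (t + 1) q uc) := by
      rw [sum_extend (fun t => S.Wfun ω a b t q uc - S.Wfun ω a b (t + 1) q uc) (n - q)
        (n + 1) (by omega)]
      refine Finset.sum_congr rfl fun t ht => ?_
      have ht' : t < n + 1 := Finset.mem_range.1 ht
      by_cases hc : q < n - t
      · rw [if_pos hc, if_pos (by omega)]
      · rw [if_neg hc, if_neg (by omega)]
    rw [h2, Finset.sum_range_sub' (fun t => S.Wfun ω a b t q uc) (n - q)]
  rw [hdouble]
  have hreflect : ∑ t ∈ Finset.range (n + 1), S.Wfun ω a b t (n - t) uc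
      = ∑ q ∈ Finset.range (n + 1), S.Wfun ω a b (n - q) q uc := by
    rw [← Finset.sum_range_reflect (fun q => S.Wfun ω a b (n - q) q uc) (n + 1)]
    refine Finset.sum_congr rfl fun j hj => ?_
    have hj' : j < n + 1 := Finset.mem_range.1 hj
    rw [show n + 1 - 1 - j = n - j from by omega, show n - (n - j) = j from by omega]
  rw [hreflect, Finset.sum_range_succ (fun q => S.Wfun ω a b (n - q) q uc) n,
    Finset.sum_sub_distrib, Finset.sum_range_succ (fun q => S.Wfun ω a b 0 q uc) n,
    Nat.sub_self]
  ring

end EnergyDiff2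

end PPSetup
namespace PPSetup

section Conc

variable (S : PPSetup)

lemma psh_iff (θ : S.Z) (φ : S.D) : φ ∈ S.psh θ ↔ 0 ≤ θ + S.ddc φ := Iff.rfl

lemma cons_front_add (x y : S.Z) (θ : Fin S.m → S.Z) :
    S.wedge (Fin.cons (x + y) θ) = S.wedge (Fin.cons x θ) + S.wedge (Fin.cons y θ) := by
  have h1 : (Fin.cons (x + y) θ : Fin (S.m + 1) → S.Z)
      = Function.update (Fin.cons x θ : Fin (S.m + 1) → S.Z) 0 (x + y) :=
    (cons_update_zero' x (x + y) θ).symm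
  have h2 : Function.update (Fin.cons x θ : Fin (S.m + 1) → S.Z) 0 x
      = (Fin.cons x θ : Fin (S.m + 1) → S.Z) := cons_update_zero' x x θ
  have h3 : Function.update (Fin.cons x θ : Fin (S.m + 1) → S.Z) 0 y
      = (Fin.cons y θ : Fin (S.m + 1) → S.Z) := cons_update_zero' x y θ
  rw [h1, MultilinearMap.map_update_add, h2, h3]

lemma cons_front_smul (c : ℝ) (x : S.Z) (θ : Fin S.m → S.Z) :
    S.wedge (Fin.cons (c • x) θ) = c • S.wedge (Fin.cons x θ) := by
  have h1 : (Fin.cons (c • x) θ : Fin (S.m + 1) → S.Z)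
      = Function.update (Fin.cons x θ : Fin (S.m + 1) → S.Z) 0 (c • x) :=
    (cons_update_zero' x (c • x) θ).symm
  have h2 : Function.update (Fin.cons x θ : Fin (S.m + 1) → S.Z) 0 x
      = (Fin.cons x θ : Fin (S.m + 1) → S.Z) := cons_update_zero' x x θ
  rw [h1, MultilinearMap.map_update_smul, h2]

lemma inv_shuffle (V W c : ℝ) (hV : V ≠ 0) : V⁻¹ * W * (c * V) = c * W := by
  have h1 : V⁻¹ * W * (c * V) = c * W * (V⁻¹ * V) := by ring
  rw [h1, inv_mul_cancel₀ hV, mul_one]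

lemma Wfun_zero_zero (ω a b : S.Z) : S.Wfun ω a b 0 0 = S.wedge (fun _ => b) := by
  unfold Wfun
  congr 1

lemma Wfun_zero_top (ω a b : S.Z) : S.Wfun ω a b 0 (S.m + 1) = S.wedge (fun _ => a) := by
  unfold Wfun
  congr 1
  funext j
  have h1 : ¬ ((j : ℕ) < 0) := by omega
  have h2 : (j : ℕ) < 0 + (S.m + 1) := by have := j.isLt; omega
  rw [if_neg h1, if_pos h2]

lemma Wfun_anti_step (ω : S.Z) {φ ψ : S.D} (hφ : φ ∈ S.psh ω) (hψ : ψ ∈ S.psh ω) (q : ℕ)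
    (hq : q ≤ S.m) :
    S.Wfun ω (ω + S.ddc ψ) (ω + S.ddc φ) 0 (q + 1) ((ψ : C(S.X, ℝ)) - (φ : C(S.X, ℝ)))
      ≤ S.Wfun ω (ω + S.ddc ψ) (ω + S.ddc φ) 0 q ((ψ : C(S.X, ℝ)) - (φ : C(S.X, ℝ))) := by
  rw [S.Wfun_step ω _ _ 0 q (by omega), LinearMap.add_apply]
  have hab : (ω + S.ddc ψ) - (ω + S.ddc φ) = S.ddc (ψ - φ) := by rw [map_sub]; abel
  have hcoe : ((ψ - φ : S.D) : C(S.X, ℝ)) = (ψ : C(S.X, ℝ)) - (φ : C(S.X, ℝ)) := rfl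
  have hneg : S.wedge (Fin.cons ((ω + S.ddc ψ) - (ω + S.ddc φ))
      (fun j : Fin S.m => if (j : ℕ) < 0 then ω
        else if (j : ℕ) < 0 + q then ω + S.ddc ψ else ω + S.ddc φ))
      ((ψ : C(S.X, ℝ)) - (φ : C(S.X, ℝ))) ≤ 0 := by
    rw [hab, ← hcoe]
    refine S.hodge_neg _ ?_ (ψ - φ)
    intro j
    by_cases h1 : (j : ℕ) < 0
    · omega
    · by_cases h2 : (j : ℕ) < 0 + q
      · rw [if_neg h1, if_pos h2]; exact hψ
      · rw [if_neg h1, if_neg h2]; exact hφ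
  linarith [hneg]

lemma Wfun_anti (ω : S.Z) {φ ψ : S.D} (hφ : φ ∈ S.psh ω) (hψ : ψ ∈ S.psh ω) :
    ∀ q q' : ℕ, q ≤ q' → q' ≤ S.m + 1 →
    S.Wfun ω (ω + S.ddc ψ) (ω + S.ddc φ) 0 q' ((ψ : C(S.X, ℝ)) - (φ : C(S.X, ℝ)))
      ≤ S.Wfun ω (ω + S.ddc ψ) (ω + S.ddc φ) 0 q ((ψ : C(S.X, ℝ)) - (φ : C(S.X, ℝ))) := by
  intro q q' hqq'
  induction q' , hqq' using Nat.le_induction with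
  | base => intro _; exact le_rfl
  | succ q' hq' ih =>
    intro hle
    exact le_trans (S.Wfun_anti_step ω hφ hψ q' (by omega)) (ih (by omega))

/-- concavity, upper bound -/
lemma En_sub_le_MA (ω : S.Z) (hV : 0 < S.Vol ω) {φ ψ : S.D} (hφ : φ ∈ S.psh ω)
    (hψ : ψ ∈ S.psh ω) :
    S.En ω ψ - S.En ω φ ≤ S.MAfun ω φ ((ψ : C(S.X, ℝ)) - (φ : C(S.X, ℝ))) := by
  have hsum := S.epow_sub ω φ ψ
  have hbound : ∑ q ∈ Finset.range (S.m + 2),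
      S.Wfun ω (ω + S.ddc ψ) (ω + S.ddc φ) 0 q ((ψ : C(S.X, ℝ)) - (φ : C(S.X, ℝ)))
      ≤ (S.m + 2 : ℝ) * S.Wfun ω (ω + S.ddc ψ) (ω + S.ddc φ) 0 0
          ((ψ : C(S.X, ℝ)) - (φ : C(S.X, ℝ))) := by
    have h1 : ∀ q ∈ Finset.range (S.m + 2),
        S.Wfun ω (ω + S.ddc ψ) (ω + S.ddc φ) 0 q ((ψ : C(S.X, ℝ)) - (φ : C(S.X, ℝ)))
        ≤ S.Wfun ω (ω + S.ddc ψ) (ω + S.ddc φ) 0 0 ((ψ : C(S.X, ℝ)) - (φ : C(S.X, ℝ))) := by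
      intro q hq
      exact S.Wfun_anti ω hφ hψ 0 q (by omega) (by have := Finset.mem_range.1 hq; omega)
    calc ∑ q ∈ Finset.range (S.m + 2), _ ≤ ∑ q ∈ Finset.range (S.m + 2),
        S.Wfun ω (ω + S.ddc ψ) (ω + S.ddc φ) 0 0 ((ψ : C(S.X, ℝ)) - (φ : C(S.X, ℝ))) :=
          Finset.sum_le_sum h1
      _ = (S.m + 2 : ℝ) * _ := by
          rw [Finset.sum_const, Finset.card_range, nsmul_eq_mul]
          push_cast
          ring
  have hMA : S.MAfun ω φ ((ψ : C(S.X, ℝ)) - (φ : C(S.X, ℝ)))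
      = (S.Vol ω)⁻¹ * S.Wfun ω (ω + S.ddc ψ) (ω + S.ddc φ) 0 0
          ((ψ : C(S.X, ℝ)) - (φ : C(S.X, ℝ))) := by
    rw [S.Wfun_zero_zero]
    rfl
  have hEn : S.En ω ψ - S.En ω φ
      = (S.epow ω ψ - S.epow ω φ) / ((S.m + 2 : ℝ) * S.Vol ω) := by
    unfold En
    rw [div_sub_div_same]
  rw [hEn, hsum, hMA]
  rw [div_le_iff₀ (by positivity)]
  calc ∑ q ∈ Finset.range (S.m + 2), _ ≤ (S.m + 2 : ℝ) * _ := hbound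
    _ = (S.Vol ω)⁻¹ * S.Wfun ω (ω + S.ddc ψ) (ω + S.ddc φ) 0 0
          ((ψ : C(S.X, ℝ)) - (φ : C(S.X, ℝ))) * ((S.m + 2 : ℝ) * S.Vol ω) :=
      (inv_shuffle (S.Vol ω) _ _ hV.ne').symm

/-- concavity, lower bound -/
lemma MA_le_En_sub (ω : S.Z) (hV : 0 < S.Vol ω) {φ ψ : S.D} (hφ : φ ∈ S.psh ω)
    (hψ : ψ ∈ S.psh ω) :
    S.MAfun ω ψ ((ψ : C(S.X, ℝ)) - (φ : C(S.X, ℝ))) ≤ S.En ω ψ - S.En ω φ := by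
  have hsum := S.epow_sub ω φ ψ
  have hbound : (S.m + 2 : ℝ) * S.Wfun ω (ω + S.ddc ψ) (ω + S.ddc φ) 0 (S.m + 1)
          ((ψ : C(S.X, ℝ)) - (φ : C(S.X, ℝ)))
      ≤ ∑ q ∈ Finset.range (S.m + 2),
        S.Wfun ω (ω + S.ddc ψ) (ω + S.ddc φ) 0 q ((ψ : C(S.X, ℝ)) - (φ : C(S.X, ℝ))) := by
    have h1 : ∀ q ∈ Finset.range (S.m + 2),
        S.Wfun ω (ω + S.ddc ψ) (ω + S.ddc φ) 0 (S.m + 1) ((ψ : C(S.X, ℝ)) - (φ : C(S.X, ℝ)))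
        ≤ S.Wfun ω (ω + S.ddc ψ) (ω + S.ddc φ) 0 q ((ψ : C(S.X, ℝ)) - (φ : C(S.X, ℝ))) := by
      intro q hq
      exact S.Wfun_anti ω hφ hψ q (S.m + 1) (by have := Finset.mem_range.1 hq; omega) (by omega)
    calc (S.m + 2 : ℝ) * _ = ∑ q ∈ Finset.range (S.m + 2),
        S.Wfun ω (ω + S.ddc ψ) (ω + S.ddc φ) 0 (S.m + 1)
          ((ψ : C(S.X, ℝ)) - (φ : C(S.X, ℝ))) := by
          rw [Finset.sum_const, Finset.card_range, nsmul_eq_mul]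
          push_cast
          ring
      _ ≤ _ := Finset.sum_le_sum h1
  have hMA : S.MAfun ω ψ ((ψ : C(S.X, ℝ)) - (φ : C(S.X, ℝ)))
      = (S.Vol ω)⁻¹ * S.Wfun ω (ω + S.ddc ψ) (ω + S.ddc φ) 0 (S.m + 1)
          ((ψ : C(S.X, ℝ)) - (φ : C(S.X, ℝ))) := by
    rw [S.Wfun_zero_top]
    rfl
  have hEn : S.En ω ψ - S.En ω φ
      = (S.epow ω ψ - S.epow ω φ) / ((S.m + 2 : ℝ) * S.Vol ω) := by
    unfold En
    rw [div_sub_div_same]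
  rw [hEn, hsum, hMA]
  rw [le_div_iff₀ (by positivity)]
  calc (S.Vol ω)⁻¹ * S.Wfun ω (ω + S.ddc ψ) (ω + S.ddc φ) 0 (S.m + 1)
        ((ψ : C(S.X, ℝ)) - (φ : C(S.X, ℝ))) * ((S.m + 2 : ℝ) * S.Vol ω)
      = (S.m + 2 : ℝ) * S.Wfun ω (ω + S.ddc ψ) (ω + S.ddc φ) 0 (S.m + 1)
        ((ψ : C(S.X, ℝ)) - (φ : C(S.X, ℝ))) :=
      inv_shuffle (S.Vol ω) _ _ hV.ne'
    _ ≤ _ := hbound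

end Conc

end PPSetup
namespace PPSetup

section MA

variable (S : PPSetup)

lemma ddc_constD (c : ℝ) : S.ddc (S.constD c) = 0 := S.ddc_const c

lemma coe_constD (c : ℝ) : ((S.constD c : S.D) : C(S.X, ℝ)) = ContinuousMap.const S.X c := rfl

lemma psh_const (ω : S.Z) (hω : 0 ≤ ω) (c : ℝ) : S.constD c ∈ S.psh ω := by
  rw [S.psh_iff, S.ddc_constD, add_zero]
  exact hω

lemma ddc_add_const (φ : S.D) (c : ℝ) : S.ddc (φ + S.constD c) = S.ddc φ := by
  rw [map_add, S.ddc_constD, add_zero]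

lemma psh_add_const (ω : S.Z) {φ : S.D} (hφ : φ ∈ S.psh ω) (c : ℝ) :
    φ + S.constD c ∈ S.psh ω := by
  rw [S.psh_iff, S.ddc_add_const]
  exact hφ

lemma MAfun_nonneg (ω : S.Z) (hV : 0 < S.Vol ω) {φ : S.D} (hφ : φ ∈ S.psh ω) {g : C(S.X, ℝ)}
    (hg : 0 ≤ g) : 0 ≤ S.MAfun ω φ g := by
  unfold MAfun
  rw [LinearMap.smul_apply, smul_eq_mul]
  exact mul_nonneg (inv_nonneg.2 hV.le) (S.wedge_pos _ (fun _ => hφ) g hg)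

lemma MAfun_mono (ω : S.Z) (hV : 0 < S.Vol ω) {φ : S.D} (hφ : φ ∈ S.psh ω) {g h : C(S.X, ℝ)}
    (hgh : g ≤ h) : S.MAfun ω φ g ≤ S.MAfun ω φ h := by
  have h1 : 0 ≤ S.MAfun ω φ (h - g) := S.MAfun_nonneg ω hV hφ (sub_nonneg.2 hgh)
  rw [map_sub] at h1
  linarith

lemma MAfun_one (ω : S.Z) (hV : 0 < S.Vol ω) (φ : S.D) : S.MAfun ω φ S.one = 1 := by
  unfold MAfun
  rw [LinearMap.smul_apply, smul_eq_mul,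
    S.wedge_one_eq (fun _ => ω + S.ddc φ) ω (fun _ => ⟨φ, rfl⟩), inv_mul_cancel₀ hV.ne']

lemma MAfun_abs_le (ω : S.Z) (hV : 0 < S.Vol ω) {φ : S.D} (hφ : φ ∈ S.psh ω) (g : C(S.X, ℝ)) :
    |S.MAfun ω φ g| ≤ ‖g‖ := by
  unfold MAfun
  rw [LinearMap.smul_apply, smul_eq_mul, abs_mul, abs_of_nonneg (inv_nonneg.2 hV.le)]
  have h1 := S.wedge_abs_le (fun _ => ω + S.ddc φ) (fun _ => hφ) g
  rw [S.wedge_one_eq (fun _ => ω + S.ddc φ) ω (fun _ => ⟨φ, rfl⟩)] at h1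
  calc (S.Vol ω)⁻¹ * |S.wedge (fun _ => ω + S.ddc φ) g|
      ≤ (S.Vol ω)⁻¹ * (S.Vol ω * ‖g‖) := by
        exact mul_le_mul_of_nonneg_left h1 (inv_nonneg.2 hV.le)
    _ = ‖g‖ := by rw [← mul_assoc, inv_mul_cancel₀ hV.ne', one_mul]

/-- the key Monge–Ampère difference bound -/
lemma MAfun_diff (ω : S.Z) (hV : 0 < S.Vol ω) {φ ψ : S.D} (hφ : φ ∈ S.psh ω)
    (hψ : ψ ∈ S.psh ω) {gp gm : S.D} {Cg : ℝ} (hgp : gp ∈ S.psh (Cg • ω))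
    (hgm : gm ∈ S.psh (Cg • ω)) :
    |S.MAfun ω ψ ((gp : C(S.X, ℝ)) - (gm : C(S.X, ℝ)))
      - S.MAfun ω φ ((gp : C(S.X, ℝ)) - (gm : C(S.X, ℝ)))|
    ≤ 2 * (S.m + 1 : ℝ) * Cg * ‖(ψ : C(S.X, ℝ)) - (φ : C(S.X, ℝ))‖ := by
  set g : C(S.X, ℝ) := (gp : C(S.X, ℝ)) - (gm : C(S.X, ℝ)) with hg
  set u : C(S.X, ℝ) := (ψ : C(S.X, ℝ)) - (φ : C(S.X, ℝ)) with hu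
  set a := ω + S.ddc ψ with ha
  set b := ω + S.ddc φ with hb
  set P := Cg • ω + S.ddc gp with hP
  set N := Cg • ω + S.ddc gm with hN
  have hPpos : 0 ≤ P := hgp
  have hNpos : 0 ≤ N := hgm
  have hapos : 0 ≤ a := hψ
  have hbpos : 0 ≤ b := hφ
  have htel := S.wedge_telescope (fun _ => a) (fun _ => b) g
  set tails : Fin (S.m + 1) → Fin S.m → S.Z := fun k j =>
    if ((k.succAbove j : Fin (S.m + 1)) : ℕ) < (k : ℕ) then a else b with htails
  have htails_pos : ∀ k j, 0 ≤ tails k j := by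
    intro k j
    simp only [htails]
    by_cases hc : ((k.succAbove j : Fin (S.m + 1)) : ℕ) < (k : ℕ)
    · rw [if_pos hc]; exact hapos
    · rw [if_neg hc]; exact hbpos
  have hterm : ∀ k : Fin (S.m + 1),
      S.wedge (Fin.cons (a - b) (tails k)) g
      = S.wedge (Fin.cons P (tails k)) u - S.wedge (Fin.cons N (tails k)) u := by
    intro k
    have hab : a - b = S.ddc (ψ - φ) := by rw [ha, hb, map_sub]; abel
    have hgcoe : ((gp - gm : S.D) : C(S.X, ℝ)) = g := rfl
    have hucoe : ((ψ - φ : S.D) : C(S.X, ℝ)) = u := rfl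
    rw [hab, ← hgcoe, S.hodge_symm (tails k) (gp - gm) (ψ - φ), hucoe]
    have hd : S.ddc (gp - gm) = P - N := by rw [hP, hN, map_sub]; abel
    rw [hd, S.cons_front_split P N (tails k), LinearMap.sub_apply]
  have hmassω : ∀ k : Fin (S.m + 1), S.wedge (Fin.cons ω (tails k)) S.one = S.Vol ω := by
    intro k
    refine S.wedge_one_eq _ ω ?_
    intro i
    refine Fin.cases ?_ ?_ i
    · exact ⟨0, by rw [Fin.cons_zero, map_zero, add_zero]⟩
    · intro j
      rw [Fin.cons_succ]
      simp only [htails]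
      by_cases hc : ((k.succAbove j : Fin (S.m + 1)) : ℕ) < (k : ℕ)
      · rw [if_pos hc]; exact ⟨ψ, ha⟩
      · rw [if_neg hc]; exact ⟨φ, hb⟩
  have hmassP : ∀ k : Fin (S.m + 1), S.wedge (Fin.cons P (tails k)) S.one = Cg * S.Vol ω := by
    intro k
    rw [hP, S.cons_front_add (Cg • ω) (S.ddc gp) (tails k), LinearMap.add_apply,
      S.wedge_cons_ddc_one, add_zero, S.cons_front_smul Cg ω (tails k), LinearMap.smul_apply,
      smul_eq_mul, hmassω k]
  have hmassN : ∀ k : Fin (S.m + 1), S.wedge (Fin.cons N (tails k)) S.one = Cg * S.Vol ω := by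
    intro k
    rw [hN, S.cons_front_add (Cg • ω) (S.ddc gm) (tails k), LinearMap.add_apply,
      S.wedge_cons_ddc_one, add_zero, S.cons_front_smul Cg ω (tails k), LinearMap.smul_apply,
      smul_eq_mul, hmassω k]
  have hbnd : ∀ k : Fin (S.m + 1),
      |S.wedge (Fin.cons (a - b) (tails k)) g| ≤ 2 * (Cg * S.Vol ω) * ‖u‖ := by
    intro k
    rw [hterm k]
    have hconsP : ∀ i, 0 ≤ (Fin.cons P (tails k) : Fin (S.m + 1) → S.Z) i := by
      intro i
      refine Fin.cases ?_ ?_ i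
      · rw [Fin.cons_zero]; exact hPpos
      · intro j; rw [Fin.cons_succ]; exact htails_pos k j
    have hconsN : ∀ i, 0 ≤ (Fin.cons N (tails k) : Fin (S.m + 1) → S.Z) i := by
      intro i
      refine Fin.cases ?_ ?_ i
      · rw [Fin.cons_zero]; exact hNpos
      · intro j; rw [Fin.cons_succ]; exact htails_pos k j
    have h1 := S.wedge_abs_le (Fin.cons P (tails k)) hconsP u
    have h2 := S.wedge_abs_le (Fin.cons N (tails k)) hconsN u
    rw [hmassP k] at h1
    rw [hmassN k] at h2
    calc |S.wedge (Fin.cons P (tails k)) u - S.wedge (Fin.cons N (tails k)) u|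
        ≤ |S.wedge (Fin.cons P (tails k)) u| + |S.wedge (Fin.cons N (tails k)) u| :=
          abs_sub _ _
      _ ≤ Cg * S.Vol ω * ‖u‖ + Cg * S.Vol ω * ‖u‖ := add_le_add h1 h2
      _ = 2 * (Cg * S.Vol ω) * ‖u‖ := by ring
  have hdiff : S.MAfun ω ψ g - S.MAfun ω φ g
      = (S.Vol ω)⁻¹ * ∑ k : Fin (S.m + 1), S.wedge (Fin.cons (a - b) (tails k)) g := by
    unfold MAfun
    rw [LinearMap.smul_apply, LinearMap.smul_apply, smul_eq_mul, smul_eq_mul, ← mul_sub]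
    congr 1
    show S.wedge (fun _ => a) g - S.wedge (fun _ => b) g
      = ∑ k : Fin (S.m + 1), S.wedge (Fin.cons (a - b) (tails k)) g
    rw [htel]
    ring
  rw [hdiff, abs_mul, abs_of_nonneg (inv_nonneg.2 hV.le)]
  calc (S.Vol ω)⁻¹ * |∑ k : Fin (S.m + 1), S.wedge (Fin.cons (a - b) (tails k)) g|
      ≤ (S.Vol ω)⁻¹ * ((S.m + 1 : ℝ) * (2 * (Cg * S.Vol ω) * ‖u‖)) := by
        refine mul_le_mul_of_nonneg_left ?_ (inv_nonneg.2 hV.le)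
        calc |∑ k : Fin (S.m + 1), S.wedge (Fin.cons (a - b) (tails k)) g|
            ≤ ∑ k : Fin (S.m + 1), |S.wedge (Fin.cons (a - b) (tails k)) g| :=
              Finset.abs_sum_le_sum_abs _ _
          _ ≤ ∑ _k : Fin (S.m + 1), 2 * (Cg * S.Vol ω) * ‖u‖ :=
              Finset.sum_le_sum fun k _ => hbnd k
          _ = (S.m + 1 : ℝ) * (2 * (Cg * S.Vol ω) * ‖u‖) := by
              rw [Finset.sum_const, Finset.card_univ, Fintype.card_fin, nsmul_eq_mul]
              push_cast
              ring
    _ = 2 * (S.m + 1 : ℝ) * Cg * ‖u‖ := by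
        have h1 : (S.Vol ω)⁻¹ * ((S.m + 1 : ℝ) * (2 * (Cg * S.Vol ω) * ‖u‖))
            = 2 * (S.m + 1 : ℝ) * Cg * ‖u‖ * ((S.Vol ω)⁻¹ * S.Vol ω) := by ring
        rw [h1, inv_mul_cancel₀ hV.ne', mul_one]

end MA

end PPSetup
namespace PPSetup

section EnLemmas

variable (S : PPSetup)

lemma const_eq_smul_one (c : ℝ) : ContinuousMap.const S.X c = c • S.one := by
  ext x
  simp [PPSetup.one]

lemma En_zero (ω : S.Z) : S.En ω 0 = 0 := by
  unfold En
  rw [S.epow_formula ω 0]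
  have h : ∀ i : Fin (S.m + 2),
      S.wedge (fun j => if (j : ℕ) < (i : ℕ) then ω else ω + S.ddc 0) ((0 : S.D) : C(S.X, ℝ))
      = 0 := by
    intro i
    have : ((0 : S.D) : C(S.X, ℝ)) = 0 := rfl
    rw [this, map_zero]
  rw [Finset.sum_congr rfl fun i _ => h i, Finset.sum_const, smul_zero, zero_div]

lemma En_add_const (ω : S.Z) (hV : 0 < S.Vol ω) (ψ : S.D) (c : ℝ) :
    S.En ω (ψ + S.constD c) = S.En ω ψ + c := by
  have hepow : S.epow ω (ψ + S.constD c) = S.epow ω ψ + (S.m + 2 : ℝ) * (c * S.Vol ω) := by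
    rw [S.epow_formula ω (ψ + S.constD c), S.epow_formula ω ψ]
    have hterm : ∀ i : Fin (S.m + 2),
        S.wedge (fun j => if (j : ℕ) < (i : ℕ) then ω else ω + S.ddc (ψ + S.constD c))
          ((ψ + S.constD c : S.D) : C(S.X, ℝ))
        = S.wedge (fun j => if (j : ℕ) < (i : ℕ) then ω else ω + S.ddc ψ) (ψ : C(S.X, ℝ))
          + c * S.Vol ω := by
      intro i
      rw [S.ddc_add_const]
      have hcoe : ((ψ + S.constD c : S.D) : C(S.X, ℝ))
          = (ψ : C(S.X, ℝ)) + c • S.one := by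
        rw [← S.const_eq_smul_one c]
        rfl
      rw [hcoe, map_add, map_smul, smul_eq_mul]
      congr 1
      congr 1
      refine S.wedge_one_eq _ ω ?_
      intro k
      by_cases hk : (k : ℕ) < (i : ℕ)
      · exact ⟨0, by rw [if_pos hk, map_zero, add_zero]⟩
      · exact ⟨ψ, by rw [if_neg hk]⟩
    rw [Finset.sum_congr rfl fun i _ => hterm i, Finset.sum_add_distrib, Finset.sum_const,
      Finset.card_univ, Fintype.card_fin, nsmul_eq_mul]
    push_cast
    ring
  unfold En
  rw [hepow, add_div]
  congr 1
  have h1 : (S.m + 2 : ℝ) * (c * S.Vol ω) = c * ((S.m + 2 : ℝ) * S.Vol ω) := by ring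
  rw [h1, mul_div_assoc, div_self (by positivity), mul_one]

lemma En_const (ω : S.Z) (hV : 0 < S.Vol ω) (c : ℝ) : S.En ω (S.constD c) = c := by
  have h := S.En_add_const ω hV 0 c
  rw [zero_add, S.En_zero ω, zero_add] at h
  exact h

lemma En_mono (ω : S.Z) (hV : 0 < S.Vol ω) {φ ψ : S.D} (hφ : φ ∈ S.psh ω) (hψ : ψ ∈ S.psh ω)
    (h : (ψ : C(S.X, ℝ)) ≤ (φ : C(S.X, ℝ))) : S.En ω ψ ≤ S.En ω φ := by
  have h1 := S.MA_le_En_sub ω hV (φ := ψ) (ψ := φ) hψ hφ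
  have h2 : 0 ≤ S.MAfun ω φ ((φ : C(S.X, ℝ)) - (ψ : C(S.X, ℝ))) :=
    S.MAfun_nonneg ω hV hφ (sub_nonneg.2 h)
  linarith

lemma En_le_of_le (ω : S.Z) (hω : 0 ≤ ω) (hV : 0 < S.Vol ω) {φ : S.D} (hφ : φ ∈ S.psh ω)
    {h : C(S.X, ℝ)} (hle : (φ : C(S.X, ℝ)) ≤ h) : S.En ω φ ≤ ‖h‖ := by
  have h1 : (φ : C(S.X, ℝ)) ≤ ((S.constD ‖h‖ : S.D) : C(S.X, ℝ)) := by
    rw [ContinuousMap.le_def]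
    intro x
    rw [ContinuousMap.le_def] at hle
    have h2 : h x ≤ ‖h‖ := by
      have := h.norm_coe_le_norm x
      rw [Real.norm_eq_abs] at this
      linarith [(abs_le.1 this).2]
    calc (φ : C(S.X, ℝ)) x ≤ h x := hle x
      _ ≤ ‖h‖ := h2
      _ = (S.constD ‖h‖ : C(S.X, ℝ)) x := rfl
  calc S.En ω φ ≤ S.En ω (S.constD ‖h‖) :=
      S.En_mono ω hV (S.psh_const ω hω ‖h‖) hφ h1
    _ = ‖h‖ := S.En_const ω hV ‖h‖

end EnLemmas

end PPSetup
namespace PPSetup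

section EnExtLemmas

variable (S : PPSetup)

lemma norm_lower (f : C(S.X, ℝ)) (x : S.X) : -‖f‖ ≤ f x := by
  have := f.norm_coe_le_norm x
  rw [Real.norm_eq_abs] at this
  linarith [(abs_le.1 this).1]

lemma norm_upper (f : C(S.X, ℝ)) (x : S.X) : f x ≤ ‖f‖ := by
  have := f.norm_coe_le_norm x
  rw [Real.norm_eq_abs] at this
  linarith [(abs_le.1 this).2]

lemma EnExt_eq_sSup (ω : S.Z) (f : C(S.X, ℝ)) :
    S.EnExt ω f = sSup {x | ∃ φ ∈ S.psh ω, (φ : C(S.X, ℝ)) ≤ f ∧ x = S.En ω φ} := rfl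

lemma EnExt_set_nonempty (ω : S.Z) (hω : 0 ≤ ω) (f : C(S.X, ℝ)) :
    {x | ∃ φ ∈ S.psh ω, (φ : C(S.X, ℝ)) ≤ f ∧ x = S.En ω φ}.Nonempty := by
  refine ⟨S.En ω (S.constD (-‖f‖)), S.constD (-‖f‖), S.psh_const ω hω _, ?_, rfl⟩
  rw [ContinuousMap.le_def]
  intro x
  exact S.norm_lower f x

lemma EnExt_set_bddAbove (ω : S.Z) (hω : 0 ≤ ω) (hV : 0 < S.Vol ω) (f : C(S.X, ℝ)) :
    BddAbove {x | ∃ φ ∈ S.psh ω, (φ : C(S.X, ℝ)) ≤ f ∧ x = S.En ω φ} := by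
  refine ⟨‖f‖, ?_⟩
  rintro x ⟨φ, hφ, hle, rfl⟩
  exact S.En_le_of_le ω hω hV hφ hle

lemma le_EnExt (ω : S.Z) (hω : 0 ≤ ω) (hV : 0 < S.Vol ω) {φ : S.D} (hφ : φ ∈ S.psh ω)
    {f : C(S.X, ℝ)} (hle : (φ : C(S.X, ℝ)) ≤ f) : S.En ω φ ≤ S.EnExt ω f :=
  le_csSup (S.EnExt_set_bddAbove ω hω hV f) ⟨φ, hφ, hle, rfl⟩

lemma EnExt_le (ω : S.Z) (hω : 0 ≤ ω) {f : C(S.X, ℝ)} {B : ℝ}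
    (hB : ∀ φ ∈ S.psh ω, (φ : C(S.X, ℝ)) ≤ f → S.En ω φ ≤ B) : S.EnExt ω f ≤ B := by
  refine csSup_le (S.EnExt_set_nonempty ω hω f) ?_
  rintro x ⟨φ, hφ, hle, rfl⟩
  exact hB φ hφ hle

lemma EnExt_mono (ω : S.Z) (hω : 0 ≤ ω) (hV : 0 < S.Vol ω) {f g : C(S.X, ℝ)} (hfg : f ≤ g) :
    S.EnExt ω f ≤ S.EnExt ω g := by
  refine csSup_le_csSup (S.EnExt_set_bddAbove ω hω hV g) (S.EnExt_set_nonempty ω hω f) ?_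
  rintro x ⟨φ, hφ, hle, rfl⟩
  exact ⟨φ, hφ, le_trans hle hfg, rfl⟩

lemma EnExt_psh (ω : S.Z) (hω : 0 ≤ ω) (hV : 0 < S.Vol ω) {φ : S.D} (hφ : φ ∈ S.psh ω) :
    S.EnExt ω (φ : C(S.X, ℝ)) = S.En ω φ := by
  refine le_antisymm ?_ (S.le_EnExt ω hω hV hφ le_rfl)
  refine S.EnExt_le ω hω ?_
  intro ψ hψ hle
  exact S.En_mono ω hV hφ hψ hle

lemma EnExt_upper (ω : S.Z) (hω : 0 ≤ ω) (hV : 0 < S.Vol ω) {φ : S.D} (hφ : φ ∈ S.psh ω)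
    (g : C(S.X, ℝ)) :
    S.EnExt ω ((φ : C(S.X, ℝ)) + g) ≤ S.En ω φ + S.MAfun ω φ g := by
  refine S.EnExt_le ω hω ?_
  intro ψ hψ hle
  have h1 := S.En_sub_le_MA ω hV hφ hψ
  have h2 : S.MAfun ω φ ((ψ : C(S.X, ℝ)) - (φ : C(S.X, ℝ))) ≤ S.MAfun ω φ g := by
    refine S.MAfun_mono ω hV hφ ?_
    rw [ContinuousMap.le_def] at hle ⊢
    intro x
    have := hle x
    simp only [ContinuousMap.sub_apply, ContinuousMap.add_apply] at this ⊢
    linarith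
  linarith

lemma Vol_nonneg (ω : S.Z) (hω : 0 ≤ ω) : 0 ≤ S.Vol ω := by
  refine S.wedge_pos _ (fun _ => hω) S.one ?_
  rw [ContinuousMap.le_def]
  intro x
  show (0 : ℝ) ≤ 1
  norm_num

lemma MAfun_zero_of_vol_zero (ω : S.Z) (hV : S.Vol ω = 0) (φ : S.D) :
    S.MAfun ω φ = 0 := by
  unfold MAfun
  rw [hV, inv_zero, zero_smul]

lemma En_zero_of_vol_zero (ω : S.Z) (hV : S.Vol ω = 0) (φ : S.D) : S.En ω φ = 0 := by
  unfold En
  rw [hV, mul_zero, div_zero]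

lemma EnExt_zero_of_vol_zero (ω : S.Z) (hω : 0 ≤ ω) (hV : S.Vol ω = 0) (f : C(S.X, ℝ)) :
    S.EnExt ω f = 0 := by
  rw [S.EnExt_eq_sSup]
  have hset : {x | ∃ φ ∈ S.psh ω, (φ : C(S.X, ℝ)) ≤ f ∧ x = S.En ω φ} = {0} := by
    ext x
    simp only [Set.mem_setOf_eq, Set.mem_singleton_iff]
    constructor
    · rintro ⟨φ, hφ, hle, rfl⟩
      exact S.En_zero_of_vol_zero ω hV φ
    · rintro rfl
      refine ⟨S.constD (-‖f‖), S.psh_const ω hω _, ?_, (S.En_zero_of_vol_zero ω hV _).symm⟩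
      rw [ContinuousMap.le_def]
      intro x
      exact S.norm_lower f x
  rw [hset, csSup_singleton]

lemma orthogonal_of_vol_zero (ω : S.Z) (hω : 0 ≤ ω) (hV : S.Vol ω = 0)
    (hmax : S.admitsMaxima ω) : S.orthogonal ω := by
  refine ⟨hmax, ?_⟩
  intro f ε hε
  refine ⟨S.constD (-‖(f : C(S.X, ℝ))‖ - 1), S.psh_const ω hω _, ?_, ?_⟩
  · intro x
    have := S.norm_lower (f : C(S.X, ℝ)) x
    show -‖(f : C(S.X, ℝ))‖ - 1 < (f : C(S.X, ℝ)) x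
    linarith
  · intro φ hφ _ _
    rw [S.MAfun_zero_of_vol_zero ω hV φ, LinearMap.zero_apply]
    exact hε.le

end EnExtLemmas

end PPSetup
namespace PPSetup

section EstOne

variable (S : PPSetup)

/-- the central estimate: orthogonality implies the differentiability bound (at t = 1) -/
lemma est_one (ω : S.Z) (hω : 0 ≤ ω) (hV : 0 < S.Vol ω) (horth : S.orthogonal ω)
    {g gp gm : S.D} {Cg : ℝ} (hCg : 0 < Cg) (hgp : gp ∈ S.psh (Cg • ω))
    (hgm : gm ∈ S.psh (Cg • ω)) (hg : g = gp - gm) {φ : S.D} (hφ : φ ∈ S.psh ω) :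
    |S.EnExt ω ((φ : C(S.X, ℝ)) + (g : C(S.X, ℝ))) - S.En ω φ - S.MAfun ω φ (g : C(S.X, ℝ))|
      ≤ 2 * (S.m + 2 : ℝ) * Cg * ‖(g : C(S.X, ℝ))‖ := by
  set gc : C(S.X, ℝ) := (g : C(S.X, ℝ)) with hgc
  set K : ℝ := 2 * (S.m + 1 : ℝ) * Cg with hK
  have hKpos : 0 < K := by
    rw [hK]; positivity
  have hgc' : gc = (gp : C(S.X, ℝ)) - (gm : C(S.X, ℝ)) := by rw [hgc, hg]; rfl
  -- upper bound
  have hub : S.EnExt ω ((φ : C(S.X, ℝ)) + gc) - S.En ω φ - S.MAfun ω φ gc ≤ 0 := by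
    have := S.EnExt_upper ω hω hV hφ gc
    linarith
  -- lower bound
  have hlb : ∀ η : ℝ, 0 < η →
      S.En ω φ + S.MAfun ω φ gc - K * ‖gc‖ - η
        ≤ S.EnExt ω ((φ : C(S.X, ℝ)) + gc) := by
    intro η hη
    obtain ⟨hmax', horth'⟩ := horth
    set F : S.D := φ + g with hF
    have hFc : (F : C(S.X, ℝ)) = (φ : C(S.X, ℝ)) + gc := rfl
    set δ : ℝ := η / (2 * (K + 1)) with hδ
    have hδpos : 0 < δ := by rw [hδ]; positivity
    have hδle : K * δ ≤ η / 2 := by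
      rw [hδ]
      have he : K * (η / (2 * (K + 1))) = η / 2 * (K / (K + 1)) := by
        field_simp
      rw [he]
      have h1 : K / (K + 1) ≤ 1 := (div_le_one (by linarith)).2 (by linarith)
      calc η / 2 * (K / (K + 1)) ≤ η / 2 * 1 :=
        mul_le_mul_of_nonneg_left h1 (by linarith)
      _ = η / 2 := mul_one _
    obtain ⟨φ₀, hφ₀psh, hφ₀lt, hkey⟩ := horth' F (η / 2) (by positivity)
    set φ₂ : S.D := φ + S.constD (-‖gc‖ - δ) with hφ₂
    have hφ₂psh : φ₂ ∈ S.psh ω := S.psh_add_const ω hφ _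
    have hφ₂c : ∀ x, (φ₂ : C(S.X, ℝ)) x = (φ : C(S.X, ℝ)) x + (-‖gc‖ - δ) := fun x => rfl
    have hmaxlt : ∀ x : S.X,
        max ((φ₀ : C(S.X, ℝ)) x) ((φ₂ : C(S.X, ℝ)) x) < (F : C(S.X, ℝ)) x := by
      intro x
      refine max_lt (hφ₀lt x) ?_
      rw [hφ₂c x, hFc]
      have := S.norm_lower gc x
      simp only [ContinuousMap.add_apply]
      linarith
    obtain ⟨τ, hτpsh, hτge, hτlt⟩ := hmax' φ₀ hφ₀psh φ₂ hφ₂psh F hmaxlt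
    have hτge0 : ∀ x, (φ₀ : C(S.X, ℝ)) x ≤ (τ : C(S.X, ℝ)) x :=
      fun x => le_trans (le_max_left _ _) (hτge x)
    have hτge2 : ∀ x, (φ : C(S.X, ℝ)) x - ‖gc‖ - δ ≤ (τ : C(S.X, ℝ)) x := by
      intro x
      have := le_trans (le_max_right _ _) (hτge x)
      rw [hφ₂c x] at this
      linarith
    have hτlt' : ∀ x, (τ : C(S.X, ℝ)) x < (φ : C(S.X, ℝ)) x + gc x := by
      intro x
      have := hτlt x
      rw [hFc] at this
      simpa using this
    -- orthogonality bound at τ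
    have hMAτ : S.MAfun ω τ ((F : C(S.X, ℝ)) - (τ : C(S.X, ℝ))) ≤ η / 2 :=
      hkey τ hτpsh hτge0 hτlt
    -- norm bound on τ - φ
    have hnorm : ‖(τ : C(S.X, ℝ)) - (φ : C(S.X, ℝ))‖ ≤ ‖gc‖ + δ := by
      refine ContinuousMap.norm_le _ (by positivity) |>.2 ?_
      intro x
      rw [ContinuousMap.sub_apply, Real.norm_eq_abs, abs_le]
      constructor
      · have := hτge2 x
        linarith
      · have h1 := hτlt' x
        have h2 := S.norm_upper gc x
        linarith
    -- MA difference bound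
    have hdiff : |S.MAfun ω τ gc - S.MAfun ω φ gc| ≤ K * (‖gc‖ + δ) := by
      have h1 := S.MAfun_diff ω hV hφ hτpsh hgp hgm
      rw [← hgc'] at h1
      calc |S.MAfun ω τ gc - S.MAfun ω φ gc|
          ≤ 2 * (S.m + 1 : ℝ) * Cg * ‖(τ : C(S.X, ℝ)) - (φ : C(S.X, ℝ))‖ := h1
        _ ≤ K * (‖gc‖ + δ) := by
            rw [hK]
            exact mul_le_mul_of_nonneg_left hnorm (by positivity)
    -- concavity at τ
    have hconc := S.MA_le_En_sub ω hV (φ := φ) (ψ := τ) hφ hτpsh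
    -- rewrite MAτ(τ - φ)
    have hsplit : S.MAfun ω τ ((τ : C(S.X, ℝ)) - (φ : C(S.X, ℝ)))
        = S.MAfun ω τ gc - S.MAfun ω τ ((F : C(S.X, ℝ)) - (τ : C(S.X, ℝ))) := by
      rw [← map_sub]
      congr 1
      rw [hFc]
      abel
    -- assemble
    have hEτ : S.En ω φ + S.MAfun ω φ gc - η / 2 - K * (‖gc‖ + δ) ≤ S.En ω τ := by
      have h1 := abs_le.1 hdiff
      rw [hsplit] at hconc
      linarith [h1.1]
    have hle : S.En ω τ ≤ S.EnExt ω ((φ : C(S.X, ℝ)) + gc) := by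
      refine S.le_EnExt ω hω hV hτpsh ?_
      rw [ContinuousMap.le_def]
      intro x
      simp only [ContinuousMap.add_apply]
      exact (hτlt' x).le
    have harith : K * (‖gc‖ + δ) = K * ‖gc‖ + K * δ := by ring
    rw [harith] at hEτ
    linarith
  have hlb' : S.En ω φ + S.MAfun ω φ gc - K * ‖gc‖
      ≤ S.EnExt ω ((φ : C(S.X, ℝ)) + gc) := by
    refine le_of_forall_pos_le_add ?_
    intro η hη
    have := hlb η hη
    linarith
  have hKle : K * ‖gc‖ ≤ 2 * (S.m + 2 : ℝ) * Cg * ‖gc‖ := by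
    have : K ≤ 2 * (S.m + 2 : ℝ) * Cg := by rw [hK]; nlinarith [hCg.le]
    exact mul_le_mul_of_nonneg_right this (norm_nonneg _)
  have hpos : 0 ≤ 2 * (S.m + 2 : ℝ) * Cg * ‖gc‖ := by positivity
  rw [abs_le]
  constructor
  · linarith
  · linarith

end EstOne

end PPSetup
namespace PPSetup

section Scaling

variable (S : PPSetup)

/-- the quadratic estimate for all t, from orthogonality -/
lemma est_t (ω : S.Z) (hω : 0 ≤ ω) (hV : 0 < S.Vol ω) (horth : S.orthogonal ω)
    {f fp fm : S.D} {Cf : ℝ} (hCf : 0 < Cf) (hfp : fp ∈ S.psh (Cf • ω))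
    (hfm : fm ∈ S.psh (Cf • ω)) (hf : f = fp - fm) {φ : S.D} (hφ : φ ∈ S.psh ω) (t : ℝ) :
    |S.EnExt ω ((φ : C(S.X, ℝ)) + t • (f : C(S.X, ℝ))) - S.En ω φ
        - t * S.MAfun ω φ (f : C(S.X, ℝ))|
      ≤ 2 * (S.m + 2 : ℝ) * Cf * t ^ 2 * ‖(f : C(S.X, ℝ))‖ := by
  rcases lt_trichotomy t 0 with ht | ht | ht
  · -- t < 0
    have hgp : (-t) • fm ∈ S.psh (((-t) * Cf) • ω) := by
      rw [S.psh_iff, map_smul, mul_smul, ← smul_add]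
      exact smul_nonneg (by linarith) hfm
    have hgm : (-t) • fp ∈ S.psh (((-t) * Cf) • ω) := by
      rw [S.psh_iff, map_smul, mul_smul, ← smul_add]
      exact smul_nonneg (by linarith) hfp
    have hgeq : t • f = (-t) • fm - (-t) • fp := by
      rw [hf]
      module
    have h := S.est_one ω hω hV horth (g := t • f) (gp := (-t) • fm) (gm := (-t) • fp)
      (Cg := (-t) * Cf) (by nlinarith) hgp hgm hgeq hφ
    have hcoe : ((t • f : S.D) : C(S.X, ℝ)) = t • (f : C(S.X, ℝ)) := rfl
    rw [hcoe, map_smul, smul_eq_mul] at h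
    have hnorm : ‖t • (f : C(S.X, ℝ))‖ = -t * ‖(f : C(S.X, ℝ))‖ := by
      have h0 := norm_smul (α := ℝ) (β := C(S.X, ℝ)) t (f : C(S.X, ℝ))
      rw [Real.norm_eq_abs, abs_of_neg ht] at h0
      convert h0 using 2
    rw [hnorm] at h
    calc |S.EnExt ω ((φ : C(S.X, ℝ)) + t • (f : C(S.X, ℝ))) - S.En ω φ
        - t * S.MAfun ω φ (f : C(S.X, ℝ))|
        ≤ 2 * (S.m + 2 : ℝ) * (-t * Cf) * (-t * ‖(f : C(S.X, ℝ))‖) := h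
      _ = 2 * (S.m + 2 : ℝ) * Cf * t ^ 2 * ‖(f : C(S.X, ℝ))‖ := by ring
  · -- t = 0
    subst ht
    rw [zero_smul, add_zero, S.EnExt_psh ω hω hV hφ]
    simp
  · -- t > 0
    have hgp : t • fp ∈ S.psh ((t * Cf) • ω) := by
      rw [S.psh_iff, map_smul, mul_smul, ← smul_add]
      exact smul_nonneg ht.le hfp
    have hgm : t • fm ∈ S.psh ((t * Cf) • ω) := by
      rw [S.psh_iff, map_smul, mul_smul, ← smul_add]
      exact smul_nonneg ht.le hfm
    have hgeq : t • f = t • fp - t • fm := by rw [hf, smul_sub]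
    have h := S.est_one ω hω hV horth (g := t • f) (gp := t • fp) (gm := t • fm)
      (Cg := t * Cf) (by nlinarith) hgp hgm hgeq hφ
    have hcoe : ((t • f : S.D) : C(S.X, ℝ)) = t • (f : C(S.X, ℝ)) := rfl
    rw [hcoe, map_smul, smul_eq_mul] at h
    have hnorm : ‖t • (f : C(S.X, ℝ))‖ = t * ‖(f : C(S.X, ℝ))‖ := by
      have h0 := norm_smul (α := ℝ) (β := C(S.X, ℝ)) t (f : C(S.X, ℝ))
      rw [Real.norm_eq_abs, abs_of_pos ht] at h0
      convert h0 using 2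
    rw [hnorm] at h
    calc |S.EnExt ω ((φ : C(S.X, ℝ)) + t • (f : C(S.X, ℝ))) - S.En ω φ
        - t * S.MAfun ω φ (f : C(S.X, ℝ))|
        ≤ 2 * (S.m + 2 : ℝ) * (t * Cf) * (t * ‖(f : C(S.X, ℝ))‖) := h
      _ = 2 * (S.m + 2 : ℝ) * Cf * t ^ 2 * ‖(f : C(S.X, ℝ))‖ := by ring

/-- every positive class is bounded by a multiple of ω modulo ddc -/
lemma bound_pos (ω : S.Z) (hpos : S.cls ω ∈ S.Pos) (θ : S.Z) :
    ∃ (C : ℝ) (χ : S.D), 0 ≤ C ∧ θ ≤ C • ω + S.ddc χ := by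
  obtain ⟨ε, hε, hball⟩ := hpos (S.cls θ)
  obtain ⟨θ', hθ'pos, hcls⟩ := hball (-ε) (by rw [abs_neg, abs_of_pos hε])
  have hcls2 : S.cls θ' = S.cls (ω + (-ε) • θ) := by
    rw [hcls]
    unfold cls
    rw [Submodule.Quotient.mk_add, Submodule.Quotient.mk_smul]
  have hmem : θ' - (ω + (-ε) • θ) ∈ LinearMap.range S.ddc :=
    (Submodule.Quotient.eq _).1 hcls2
  obtain ⟨χ, hχ⟩ := hmem
  have hle : ε • θ ≤ ω + S.ddc χ := by
    have h1 : S.ddc χ = θ' - ω + ε • θ := by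
      rw [hχ]
      rw [neg_smul]
      abel
    have h2 : ω + S.ddc χ - ε • θ = θ' := by rw [h1]; abel
    have h3 : (0 : S.Z) ≤ ω + S.ddc χ - ε • θ := by rw [h2]; exact hθ'pos
    exact sub_nonneg.1 h3
  refine ⟨ε⁻¹, ε⁻¹ • χ, by positivity, ?_⟩
  have h4 : ε⁻¹ • (ε • θ) ≤ ε⁻¹ • (ω + S.ddc χ) :=
    smul_le_smul_of_nonneg_left hle (by positivity)
  rw [smul_smul, inv_mul_cancel₀ hε.ne', one_smul, smul_add] at h4
  rw [map_smul]
  exact h4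

lemma span_decomp (S' : PPSetup) (z : S'.Z) :
    ∃ θp θn : S'.Z, 0 ≤ θp ∧ 0 ≤ θn ∧ z = θp - θn := by
  have hz : z ∈ Submodule.span ℝ {θ : S'.Z | 0 ≤ θ} := by
    rw [S'.pos_spans]
    trivial
  induction hz using Submodule.span_induction with
  | mem x hx => exact ⟨x, 0, hx, le_rfl, (sub_zero x).symm⟩
  | zero => exact ⟨0, 0, le_rfl, le_rfl, (sub_zero 0).symm⟩
  | add x y hx hy ihx ihy =>
    obtain ⟨p1, n1, hp1, hn1, he1⟩ := ihx
    obtain ⟨p2, n2, hp2, hn2, he2⟩ := ihy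
    exact ⟨p1 + p2, n1 + n2, add_nonneg hp1 hp2, add_nonneg hn1 hn2, by rw [he1, he2]; abel⟩
  | smul a x hx ih =>
    obtain ⟨p1, n1, hp1, hn1, he1⟩ := ih
    rcases le_or_gt 0 a with ha | ha
    · exact ⟨a • p1, a • n1, smul_nonneg ha hp1, smul_nonneg ha hn1, by rw [he1, smul_sub]⟩
    · refine ⟨(-a) • n1, (-a) • p1, smul_nonneg (by linarith) hn1,
        smul_nonneg (by linarith) hp1, ?_⟩
      rw [he1, smul_sub, neg_smul, neg_smul]
      abel

/-- every test function admits a decomposition as difference of Cω-psh functions -/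
lemma exists_decomp (ω : S.Z) (hω : 0 ≤ ω) (hpos : S.cls ω ∈ S.Pos) (f : S.D) :
    ∃ (C : ℝ) (fp fm : S.D), 0 < C ∧ fp ∈ S.psh (C • ω) ∧ fm ∈ S.psh (C • ω) ∧ f = fp - fm := by
  obtain ⟨θp, θn, hθp, hθn, hddc⟩ := span_decomp S (S.ddc f)
  obtain ⟨C1, χ, hC1, hbound⟩ := S.bound_pos ω hpos θn
  refine ⟨C1 + 1, f + χ, χ, by linarith, ?_, ?_, by rw [add_sub_cancel_right]⟩
  · rw [S.psh_iff, map_add]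
    have heq : (C1 + 1) • ω + (S.ddc f + S.ddc χ)
        = ((C1 • ω + S.ddc χ) - θn) + θp + ω := by
      rw [hddc, add_smul, one_smul]
      abel
    rw [heq]
    have h1 : (0 : S.Z) ≤ (C1 • ω + S.ddc χ) - θn := sub_nonneg.2 hbound
    exact add_nonneg (add_nonneg h1 hθp) hω
  · rw [S.psh_iff]
    have heq : (C1 + 1) • ω + S.ddc χ = ((C1 • ω + S.ddc χ) - θn) + θn + ω := by
      rw [add_smul, one_smul]
      abel
    rw [heq]
    have h1 : (0 : S.Z) ≤ (C1 • ω + S.ddc χ) - θn := sub_nonneg.2 hbound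
    exact add_nonneg (add_nonneg h1 hθn) hω

end Scaling

end PPSetup
namespace PPSetup

section MainB

variable (S : PPSetup)

set_option maxHeartbeats 1000000 in
/-- the quadratic estimate implies orthogonality -/
lemma orth_of_est (ω : S.Z) (hω : 0 ≤ ω) (hpos : S.cls ω ∈ S.Pos) (hmax : S.admitsMaxima ω)
    (hV : 0 < S.Vol ω) (c : ℝ) (hc : 0 < c)
    (hest : ∀ (f fp fm : S.D) (Cf : ℝ), 0 < Cf →
      fp ∈ S.psh (Cf • ω) → fm ∈ S.psh (Cf • ω) → f = fp - fm →
      ∀ φ ∈ S.psh ω, ∀ t : ℝ,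
        |S.EnExt ω ((φ : C(S.X, ℝ)) + t • (f : C(S.X, ℝ))) - S.En ω φ -
            t * S.MAfun ω φ (f : C(S.X, ℝ))| ≤ c * Cf * t ^ 2 * ‖(f : C(S.X, ℝ))‖) :
    S.orthogonal ω := by
  refine ⟨hmax, ?_⟩
  intro f ε hε
  obtain ⟨CF, FP, FM, hCF, hFP, hFM, hFeq⟩ := S.exists_decomp ω hω hpos f
  set fc : C(S.X, ℝ) := (f : C(S.X, ℝ)) with hfc
  set R : ℝ := 2 * ‖fc‖ + 1 with hR
  have hRpos : 0 < R := by rw [hR]; positivity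
  set K : ℝ := c * (CF + 1) * R with hK
  have hKpos : 0 < K := by rw [hK]; positivity
  set t : ℝ := min 1 (ε / (2 * (K + 1))) with htdef
  have htpos : 0 < t := lt_min one_pos (by positivity)
  have htle1 : t ≤ 1 := min_le_left _ _
  have hKt : K * t ≤ ε / 2 := by
    have h1 : t ≤ ε / (2 * (K + 1)) := min_le_right _ _
    calc K * t ≤ K * (ε / (2 * (K + 1))) := mul_le_mul_of_nonneg_left h1 hKpos.le
      _ = ε / 2 * (K / (K + 1)) := by field_simp
      _ ≤ ε / 2 * 1 := mul_le_mul_of_nonneg_left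
            ((div_le_one (by positivity)).2 (by linarith)) (by positivity)
      _ = ε / 2 := mul_one _
  set η : ℝ := t * ε / 2 with hη
  have hηpos : 0 < η := by rw [hη]; positivity
  set A : ℝ := S.EnExt ω fc with hA
  have hAsup : A = sSup {x | ∃ φ ∈ S.psh ω, (φ : C(S.X, ℝ)) ≤ fc ∧ x = S.En ω φ} :=
    S.EnExt_eq_sSup ω fc
  obtain ⟨x, hxmem, hxgt⟩ := exists_lt_of_lt_csSup (S.EnExt_set_nonempty ω hω fc)
    (show A - η / 2 < sSup {x | ∃ φ ∈ S.psh ω, (φ : C(S.X, ℝ)) ≤ fc ∧ x = S.En ω φ} by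
      rw [← hAsup]; linarith)
  obtain ⟨ψ₁, hψ₁psh, hψ₁le, rfl⟩ := hxmem
  set φ₁ : S.D := ψ₁ + S.constD (-(η / 2)) with hφ₁
  have hφ₁psh : φ₁ ∈ S.psh ω := S.psh_add_const ω hψ₁psh _
  have hφ₁E : S.En ω φ₁ = S.En ω ψ₁ - η / 2 := by
    rw [hφ₁, S.En_add_const ω hV]
    ring
  have hφ₁lt : ∀ x, (φ₁ : C(S.X, ℝ)) x < fc x := by
    intro x
    have h1 : (φ₁ : C(S.X, ℝ)) x = (ψ₁ : C(S.X, ℝ)) x + (-(η / 2)) := rfl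
    have h2 := (ContinuousMap.le_def.1 hψ₁le) x
    rw [h1]
    linarith
  set φ₂ : S.D := S.constD (-‖fc‖ - 1) with hφ₂
  have hφ₂psh : φ₂ ∈ S.psh ω := S.psh_const ω hω _
  have hφ₂lt : ∀ x, (φ₂ : C(S.X, ℝ)) x < fc x := by
    intro x
    have := S.norm_lower fc x
    show -‖fc‖ - 1 < fc x
    linarith
  have hcomb : ∀ x, max ((φ₁ : C(S.X, ℝ)) x) ((φ₂ : C(S.X, ℝ)) x) < (f : C(S.X, ℝ)) x :=
    fun x => max_lt (hφ₁lt x) (hφ₂lt x)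
  obtain ⟨τ₀, hτ₀psh, hτ₀ge, hτ₀lt⟩ := hmax φ₁ hφ₁psh φ₂ hφ₂psh f hcomb
  have hτ₀E : A - η ≤ S.En ω τ₀ := by
    have hle : (φ₁ : C(S.X, ℝ)) ≤ (τ₀ : C(S.X, ℝ)) := by
      rw [ContinuousMap.le_def]
      intro x
      exact le_trans (le_max_left _ _) (hτ₀ge x)
    have h1 : S.En ω φ₁ ≤ S.En ω τ₀ := S.En_mono ω hV hτ₀psh hφ₁psh hle
    linarith
  refine ⟨τ₀, hτ₀psh, hτ₀lt, ?_⟩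
  intro φ hφ hge hlt
  have hgp : FP ∈ S.psh ((CF + 1) • ω) := by
    have heq : (CF + 1) • ω + S.ddc FP = (CF • ω + S.ddc FP) + ω := by
      rw [add_smul, one_smul]
      abel
    rw [S.psh_iff, heq]
    exact add_nonneg hFP hω
  have hgm : FM + φ ∈ S.psh ((CF + 1) • ω) := by
    have heq : (CF + 1) • ω + S.ddc (FM + φ) = (CF • ω + S.ddc FM) + (ω + S.ddc φ) := by
      rw [map_add, add_smul, one_smul]
      abel
    rw [S.psh_iff, heq]
    exact add_nonneg hFM hφ
  have hgeq : f - φ = FP - (FM + φ) := by rw [hFeq]; abel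
  have h := hest (f - φ) FP (FM + φ) (CF + 1) (by linarith) hgp hgm hgeq φ hφ t
  have hcoe : ((f - φ : S.D) : C(S.X, ℝ)) = fc - (φ : C(S.X, ℝ)) := rfl
  rw [hcoe] at h
  have hle2 : (φ : C(S.X, ℝ)) + t • (fc - (φ : C(S.X, ℝ))) ≤ fc := by
    rw [ContinuousMap.le_def]
    intro x
    simp only [ContinuousMap.add_apply, ContinuousMap.smul_apply, ContinuousMap.sub_apply,
      smul_eq_mul]
    have h1 : (φ : C(S.X, ℝ)) x ≤ fc x := (hlt x).le
    nlinarith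
  have hEnExtle : S.EnExt ω ((φ : C(S.X, ℝ)) + t • (fc - (φ : C(S.X, ℝ)))) ≤ A :=
    S.EnExt_mono ω hω hV hle2
  have hEφ : A - η ≤ S.En ω φ := by
    refine le_trans hτ₀E (S.En_mono ω hV hφ hτ₀psh ?_)
    rw [ContinuousMap.le_def]
    intro x
    exact hge x
  have hnormle : ‖fc - (φ : C(S.X, ℝ))‖ ≤ R := by
    refine (ContinuousMap.norm_le _ hRpos.le).2 ?_
    intro x
    rw [ContinuousMap.sub_apply, Real.norm_eq_abs, abs_le]
    constructor
    · have h1 := hlt x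
      linarith
    · have h3 : (φ₂ : C(S.X, ℝ)) x ≤ (φ : C(S.X, ℝ)) x :=
        le_trans (le_trans (le_max_right _ _) (hτ₀ge x)) (hge x)
      have h4 := S.norm_upper fc x
      have h5 : (φ₂ : C(S.X, ℝ)) x = -‖fc‖ - 1 := rfl
      rw [h5] at h3
      rw [hR]
      linarith
  have h5 : t * S.MAfun ω φ (fc - (φ : C(S.X, ℝ))) ≤ η + c * (CF + 1) * t ^ 2 * R := by
    have hb1 := (abs_le.1 h).1
    have hb2 : c * (CF + 1) * t ^ 2 * ‖fc - (φ : C(S.X, ℝ))‖ ≤ c * (CF + 1) * t ^ 2 * R :=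
      mul_le_mul_of_nonneg_left hnormle (by positivity)
    have hEn1 := hEnExtle
    have hEn2 := hEφ
    linarith
  have h6 : S.MAfun ω φ (fc - (φ : C(S.X, ℝ))) ≤ ε / 2 + K * t := by
    have h7 : t * S.MAfun ω φ (fc - (φ : C(S.X, ℝ))) ≤ t * (ε / 2 + K * t) := by
      calc t * S.MAfun ω φ (fc - (φ : C(S.X, ℝ))) ≤ η + c * (CF + 1) * t ^ 2 * R := h5
        _ = t * (ε / 2 + K * t) := by rw [hη, hK]; ring
    exact le_of_mul_le_mul_left h7 htpos
  calc S.MAfun ω φ ((f : C(S.X, ℝ)) - (φ : C(S.X, ℝ))) ≤ ε / 2 + K * t := h6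
    _ ≤ ε / 2 + ε / 2 := by linarith
    _ = ε := by ring

end MainB

end PPSetup
namespace PPSetup

section Scaling2

variable (S : PPSetup)

/-- scaling: the t = 1 estimate implies the quadratic estimate in t -/
lemma est_scale (ω : S.Z) (hω : 0 ≤ ω) (hV : 0 < S.Vol ω) (c : ℝ)
    (h1 : ∀ (f fp fm : S.D) (Cf : ℝ), 0 < Cf →
      fp ∈ S.psh (Cf • ω) → fm ∈ S.psh (Cf • ω) → f = fp - fm →
      ∀ φ ∈ S.psh ω,
        |S.EnExt ω ((φ : C(S.X, ℝ)) + (f : C(S.X, ℝ))) - S.En ω φ -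
            S.MAfun ω φ (f : C(S.X, ℝ))| ≤ c * Cf * ‖(f : C(S.X, ℝ))‖)
    {f fp fm : S.D} {Cf : ℝ} (hCf : 0 < Cf) (hfp : fp ∈ S.psh (Cf • ω))
    (hfm : fm ∈ S.psh (Cf • ω)) (hf : f = fp - fm) {φ : S.D} (hφ : φ ∈ S.psh ω) (t : ℝ) :
    |S.EnExt ω ((φ : C(S.X, ℝ)) + t • (f : C(S.X, ℝ))) - S.En ω φ
        - t * S.MAfun ω φ (f : C(S.X, ℝ))|
      ≤ c * Cf * t ^ 2 * ‖(f : C(S.X, ℝ))‖ := by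
  rcases lt_trichotomy t 0 with ht | ht | ht
  · have hgp : (-t) • fm ∈ S.psh (((-t) * Cf) • ω) := by
      rw [S.psh_iff, map_smul, mul_smul, ← smul_add]
      exact smul_nonneg (by linarith) hfm
    have hgm : (-t) • fp ∈ S.psh (((-t) * Cf) • ω) := by
      rw [S.psh_iff, map_smul, mul_smul, ← smul_add]
      exact smul_nonneg (by linarith) hfp
    have hgeq : t • f = (-t) • fm - (-t) • fp := by
      rw [hf]
      module
    have h := h1 (t • f) ((-t) • fm) ((-t) • fp) ((-t) * Cf) (by nlinarith) hgp hgm hgeq φ hφ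
    have hcoe : ((t • f : S.D) : C(S.X, ℝ)) = t • (f : C(S.X, ℝ)) := rfl
    rw [hcoe, map_smul, smul_eq_mul] at h
    have hnorm : ‖t • (f : C(S.X, ℝ))‖ = -t * ‖(f : C(S.X, ℝ))‖ := by
      have h0 := norm_smul (α := ℝ) (β := C(S.X, ℝ)) t (f : C(S.X, ℝ))
      rw [Real.norm_eq_abs, abs_of_neg ht] at h0
      convert h0 using 2
    rw [hnorm] at h
    calc |S.EnExt ω ((φ : C(S.X, ℝ)) + t • (f : C(S.X, ℝ))) - S.En ω φ
        - t * S.MAfun ω φ (f : C(S.X, ℝ))|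
        ≤ c * (-t * Cf) * (-t * ‖(f : C(S.X, ℝ))‖) := h
      _ = c * Cf * t ^ 2 * ‖(f : C(S.X, ℝ))‖ := by ring
  · subst ht
    rw [zero_smul, add_zero, S.EnExt_psh ω hω hV hφ]
    simp
  · have hgp : t • fp ∈ S.psh ((t * Cf) • ω) := by
      rw [S.psh_iff, map_smul, mul_smul, ← smul_add]
      exact smul_nonneg ht.le hfp
    have hgm : t • fm ∈ S.psh ((t * Cf) • ω) := by
      rw [S.psh_iff, map_smul, mul_smul, ← smul_add]
      exact smul_nonneg ht.le hfm
    have hgeq : t • f = t • fp - t • fm := by rw [hf, smul_sub]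
    have h := h1 (t • f) (t • fp) (t • fm) (t * Cf) (by nlinarith) hgp hgm hgeq φ hφ
    have hcoe : ((t • f : S.D) : C(S.X, ℝ)) = t • (f : C(S.X, ℝ)) := rfl
    rw [hcoe, map_smul, smul_eq_mul] at h
    have hnorm : ‖t • (f : C(S.X, ℝ))‖ = t * ‖(f : C(S.X, ℝ))‖ := by
      have h0 := norm_smul (α := ℝ) (β := C(S.X, ℝ)) t (f : C(S.X, ℝ))
      rw [Real.norm_eq_abs, abs_of_pos ht] at h0
      convert h0 using 2
    rw [hnorm] at h
    calc |S.EnExt ω ((φ : C(S.X, ℝ)) + t • (f : C(S.X, ℝ))) - S.En ω φ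
        - t * S.MAfun ω φ (f : C(S.X, ℝ))|
        ≤ c * (t * Cf) * (t * ‖(f : C(S.X, ℝ))‖) := h
      _ = c * Cf * t ^ 2 * ‖(f : C(S.X, ℝ))‖ := by ring

end Scaling2

end PPSetup

/-- Assuming 𝒟_ω admits maxima, the orthogonality property is equivalent to the
uniform differentiability estimates (ii) and (iii) for the extended energy Ẽ_ω, with a constant
depending only on n. -/
theorem statement9 (S : PPSetup) (ω : S.Z) (hω : 0 ≤ ω) (hpos : S.cls ω ∈ S.Pos)
    (hmax : S.admitsMaxima ω) :
    (S.orthogonal ω ↔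
      ∃ c : ℝ, 0 < c ∧
        ∀ (f fp fm : S.D) (Cf : ℝ), 0 < Cf →
          fp ∈ S.psh (Cf • ω) → fm ∈ S.psh (Cf • ω) → f = fp - fm →
          ∀ φ ∈ S.psh ω,
            |S.EnExt ω ((φ : C(S.X, ℝ)) + (f : C(S.X, ℝ))) - S.En ω φ -
                S.MAfun ω φ (f : C(S.X, ℝ))| ≤ c * Cf * ‖(f : C(S.X, ℝ))‖) ∧
    (S.orthogonal ω ↔
      ∃ c : ℝ, 0 < c ∧
        ∀ (f fp fm : S.D) (Cf : ℝ), 0 < Cf →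
          fp ∈ S.psh (Cf • ω) → fm ∈ S.psh (Cf • ω) → f = fp - fm →
          ∀ φ ∈ S.psh ω, ∀ t : ℝ,
            |S.EnExt ω ((φ : C(S.X, ℝ)) + t • (f : C(S.X, ℝ))) - S.En ω φ -
                t * S.MAfun ω φ (f : C(S.X, ℝ))| ≤ c * Cf * t ^ 2 * ‖(f : C(S.X, ℝ))‖) := by
  by_cases hV0 : S.Vol ω = 0
  · have horth := S.orthogonal_of_vol_zero ω hω hV0 hmax
    constructor
    · constructor
      · intro _
        refine ⟨1, one_pos, ?_⟩
        intro f fp fm Cf hCf _ _ _ φ _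
        rw [S.EnExt_zero_of_vol_zero ω hω hV0, S.En_zero_of_vol_zero ω hV0,
          S.MAfun_zero_of_vol_zero ω hV0, LinearMap.zero_apply]
        simp only [sub_zero, zero_sub, abs_zero, abs_neg, neg_zero, sub_self]
        positivity
      · intro _
        exact horth
    · constructor
      · intro _
        refine ⟨1, one_pos, ?_⟩
        intro f fp fm Cf hCf _ _ _ φ _ t
        rw [S.EnExt_zero_of_vol_zero ω hω hV0, S.En_zero_of_vol_zero ω hV0,
          S.MAfun_zero_of_vol_zero ω hV0, LinearMap.zero_apply]
        simp only [mul_zero, sub_zero, zero_sub, abs_zero, abs_neg, neg_zero, sub_self]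
        positivity
      · intro _
        exact horth
  · have hV : 0 < S.Vol ω := lt_of_le_of_ne (S.Vol_nonneg ω hω) (Ne.symm hV0)
    constructor
    · constructor
      · intro horth
        refine ⟨2 * (S.m + 2 : ℝ), by positivity, ?_⟩
        intro f fp fm Cf hCf hfp hfm hf φ hφ
        have h := S.est_t ω hω hV horth hCf hfp hfm hf hφ 1
        rw [one_smul, one_mul, one_pow, mul_one] at h
        exact h
      · rintro ⟨c, hc, hest⟩
        exact S.orth_of_est ω hω hpos hmax hV c hc
          (fun f fp fm Cf hCf hfp hfm hf φ hφ t =>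
            S.est_scale ω hω hV c hest hCf hfp hfm hf hφ t)
    · constructor
      · intro horth
        refine ⟨2 * (S.m + 2 : ℝ), by positivity, ?_⟩
        intro f fp fm Cf hCf hfp hfm hf φ hφ t
        exact S.est_t ω hω hV horth hCf hfp hfm hf hφ t
      · rintro ⟨c, hc, hest⟩
        exact S.orth_of_est ω hω hpos hmax hV c hc hest
end
end
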